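/- arXiv:math/9712218 — 7 statements merged into one kernel-verified Lean document; each statement's English description precedes it below -/
import Mathlib

section
/- Let A be an n×n integer matrix that is invertible over ℤ (A ∈ GL_n(ℤ)). Suppose every complex eigenvalue of A has absolute value 1, and the reduction of A modulo 3 is the identity matrix in GL_n(ℤ/3ℤ). Then A is unipotent: (A − I)^n = 0. -/
open Polynomial Matrix

section Helpers
variable {n : ℕ}

private lemma eval_charpoly' (M : Matrix (Fin n) (Fin n) ℂ) (μ : ℂ) :
    M.charpoly.eval μ = (μ • (1 : Matrix (Fin n) (Fin n) ℂ) - M).det := by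
  rw [Matrix.charpoly, ← coe_evalRingHom, RingHom.map_det]
  congr 1
  ext i j
  by_cases h : i = j <;> simp [h, charmatrix, Matrix.one_apply, Matrix.diagonal]

private lemma root_iff (M : Matrix (Fin n) (Fin n) ℂ) (μ : ℂ) :
    M.charpoly.IsRoot μ ↔ (M - μ • 1).det = 0 := by
  rw [IsRoot, eval_charpoly', show M - μ • 1 = -(μ • 1 - M) by abel, Matrix.det_neg]
  simp

private lemma det_aeval_multiset (A : Matrix (Fin n) (Fin n) ℂ) (s : Multiset ℂ) :
    (aeval A ((s.map fun σ => X - C σ).prod)).det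
      = (s.map fun σ => (A - σ • 1).det).prod := by
  induction s using Multiset.induction with
  | empty => simp
  | cons a s ih =>
      simp only [Multiset.map_cons, Multiset.prod_cons, _root_.map_mul, det_mul, ih, mul_comm]
      rw [mul_comm]
      congr 1
      simp [Algebra.algebraMap_eq_smul_one]

private lemma det_pow_sub (A : Matrix (Fin n) (Fin n) ℂ) {m : ℕ} (hm : m ≠ 0) (ρ : ℂ) :
    (A ^ m - ρ • 1).det = ((X ^ m - C ρ).roots.map fun σ => (A - σ • 1).det).prod := by
  have hmonic : (X ^ m - C ρ).Monic := monic_X_pow_sub_C ρ hm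
  have h1 : (X ^ m - C ρ) = ((X ^ m - C ρ).roots.map fun σ => X - C σ).prod :=
    (IsAlgClosed.splits _).eq_prod_roots_of_monic hmonic
  have h2 : A ^ m - ρ • 1 = aeval A (X ^ m - C ρ) := by
    simp [Algebra.algebraMap_eq_smul_one]
  rw [h2]
  conv_lhs => rw [h1]
  exact det_aeval_multiset A _

private lemma eig_pow (A : Matrix (Fin n) (Fin n) ℂ) {m : ℕ} (hm : m ≠ 0) (μ : ℂ)
    (h : (A - μ • 1).det = 0) : (A ^ m - (μ ^ m) • 1).det = 0 := by
  rw [det_pow_sub A hm]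
  have hmem : μ ∈ (X ^ m - C (μ ^ m)).roots := by
    rw [mem_roots ((monic_X_pow_sub_C _ hm).ne_zero)]
    simp [IsRoot]
  exact Multiset.prod_eq_zero (h ▸ Multiset.mem_map_of_mem _ hmem)

private lemma eig_pow_rev (A : Matrix (Fin n) (Fin n) ℂ) {m : ℕ} (hm : m ≠ 0) (ρ : ℂ)
    (h : (A ^ m - ρ • 1).det = 0) : ∃ σ : ℂ, σ ^ m = ρ ∧ (A - σ • 1).det = 0 := by
  rw [det_pow_sub A hm] at h
  obtain ⟨f, hf, hf0⟩ := Multiset.mem_map.mp (Multiset.prod_eq_zero_iff.mp h)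
  refine ⟨f, ?_, hf0⟩
  have := (mem_roots ((monic_X_pow_sub_C ρ hm).ne_zero)).mp hf
  simpa [IsRoot, sub_eq_zero] using this

private lemma cube_matrix (t r : ℤ) (h : t^3 = 3*t*r) (B : Matrix (Fin n) (Fin n) ℤ) :
    (1 + t • B)^3 = 1 + (3*t) • (B + t • B^2 + r • B^3) := by
  have h3 : (C t : ℤ[X])^3 = 3 * C t * C r := by
    rw [← C_pow, h, C_mul, C_mul]; norm_num
  have hp : ((1:ℤ[X]) + C t * X)^3 = 1 + 3 * C t * (X + C t * X^2 + C r * X^3) := by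
    linear_combination (X:ℤ[X])^3 * h3
  have h2 := congrArg (aeval B) hp
  simp only [map_pow, map_add, _root_.map_mul, _root_.map_one, map_ofNat, aeval_X, aeval_C,
    Algebra.algebraMap_eq_smul_one, smul_mul_assoc, one_mul] at h2
  rw [h2]
  simp only [zsmul_eq_mul]
  push_cast
  noncomm_ring

private lemma pow_cong (B : Matrix (Fin n) (Fin n) ℤ) :
    ∀ j : ℕ, ∃ C, (1 + (3:ℤ) • B)^(3^j) = 1 + ((3:ℤ)^(j+1)) • C := by
  intro j
  induction j with
  | zero => exact ⟨B, by norm_num⟩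
  | succ j ih =>
      obtain ⟨C, hC⟩ := ih
      refine ⟨C + (3:ℤ)^(j+1) • C^2 + (3:ℤ)^(2*j+1) • C^3, ?_⟩
      have h1 : (3:ℕ)^(j+1) = 3^j * 3 := by ring
      rw [h1, pow_mul, hC, cube_matrix ((3:ℤ)^(j+1)) ((3:ℤ)^(2*j+1)) (by ring) C]
      norm_num
      rw [← pow_succ']

private lemma exists_B (M : Matrix (Fin n) (Fin n) ℤ) (h : M.map ((↑) : ℤ → ZMod 3) = 1) :
    ∃ B, M = 1 + (3:ℤ) • B := by
  have hd : ∀ i j, (3:ℤ) ∣ (M i j - (1 : Matrix (Fin n) (Fin n) ℤ) i j) := by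
    intro i j
    have h1 := congrFun (congrFun h i) j
    rw [Matrix.map_apply] at h1
    have h2 : ((M i j - (1 : Matrix (Fin n) (Fin n) ℤ) i j : ℤ) : ZMod 3) = 0 := by
      push_cast
      rw [h1]
      by_cases hij : i = j <;> simp [hij, Matrix.one_apply]
    exact_mod_cast (ZMod.intCast_zmod_eq_zero_iff_dvd _ 3).mp h2
  refine ⟨Matrix.of fun i j => (M i j - (1 : Matrix (Fin n) (Fin n) ℤ) i j) / 3, ?_⟩
  ext i j
  simp only [Matrix.add_apply, Matrix.smul_apply, Matrix.of_apply, smul_eq_mul]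
  rw [Int.mul_ediv_cancel' (hd i j)]
  ring

private lemma nu_integral (M : Matrix (Fin n) (Fin n) ℤ) (B : Matrix (Fin n) (Fin n) ℤ)
    (hB : M = 1 + (3:ℤ) • B) (ω : ℂ)
    (hω : ((M.map ((↑) : ℤ → ℂ)) - ω • 1).det = 0) :
    IsIntegral ℤ ((ω - 1) / 3) := by
  set ν := (ω - 1) / 3 with hν
  have key : M.map ((↑) : ℤ → ℂ) - ω • 1 = (3:ℂ) • (B.map ((↑) : ℤ → ℂ) - ν • 1) := by
    subst hB
    ext i j
    simp only [Matrix.map_apply, Matrix.sub_apply, Matrix.add_apply, Matrix.smul_apply,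
      smul_eq_mul, Matrix.one_apply]
    by_cases hij : i = j <;> simp only [hij, if_true, if_false, hν] <;> push_cast <;> ring
  rw [key, Matrix.det_smul] at hω
  have h3 : ((3:ℂ) ^ Fintype.card (Fin n)) ≠ 0 := pow_ne_zero _ (by norm_num)
  have hdet : (B.map ((↑) : ℤ → ℂ) - ν • 1).det = 0 := by
    rcases mul_eq_zero.mp hω with h | h
    · exact absurd h h3
    · exact h
  have hroot : (B.map ((↑) : ℤ → ℂ)).charpoly.IsRoot ν := (root_iff _ _).mpr hdet
  rw [show ((↑) : ℤ → ℂ) = ⇑(Int.castRingHom ℂ) from rfl, Matrix.charpoly_map] at hroot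
  refine ⟨B.charpoly, B.charpoly_monic, ?_⟩
  rw [show (algebraMap ℤ ℂ) = Int.castRingHom ℂ from rfl, eval₂_eq_eval_map]
  exact hroot

private lemma no_omega (ν : ℂ) (hint : IsIntegral ℤ ν)
    (hω : (1 + 3*ν)^2 + (1 + 3*ν) + 1 = 0) : False := by
  have h1 : IsIntegral ℤ (ν * ν + ν) := (hint.mul hint).add hint
  have h2 : ν * ν + ν = algebraMap ℚ ℂ (-1/3) := by
    have : (algebraMap ℚ ℂ) (-1/3) = -1/3 := by push_cast; norm_num
    rw [this]
    linear_combination hω / 9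
  rw [h2] at h1
  have h3 : IsIntegral ℤ (-1/3 : ℚ) :=
    (isIntegral_algebraMap_iff ((algebraMap ℚ ℂ).injective)).mp h1
  obtain ⟨y, hy⟩ := IsIntegrallyClosed.isIntegral_iff.mp h3
  have h5 : (y : ℚ) = -1/3 := hy
  have h4 : (y * 3 : ℤ) = -1 := by
    field_simp at h5
    exact_mod_cast h5
  omega

private lemma all_one_of_sum (s : Multiset ℝ) (h1 : ∀ x ∈ s, x ≤ 1)
    (h2 : (s.card : ℝ) ≤ s.sum) : ∀ x ∈ s, x = 1 := by
  induction s using Multiset.induction with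
  | empty => simp
  | cons a s ih =>
      have hsle : s.sum ≤ (s.card : ℝ) :=
        Multiset.sum_le_card_nsmul s 1 (fun x hx => h1 x (Multiset.mem_cons_of_mem hx)) |>.trans
          (by simp)
      have ha : a = 1 := by
        have hcard : ((a ::ₘ s).card : ℝ) = s.card + 1 := by simp [add_comm]
        have := h2
        rw [Multiset.sum_cons, hcard] at this
        have ha1 := h1 a (Multiset.mem_cons_self a s)
        linarith
      intro x hx
      rcases Multiset.mem_cons.mp hx with h | h
      · rw [h, ha]
      · refine ih (fun y hy => h1 y (Multiset.mem_cons_of_mem hy)) ?_ x h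
        have := h2
        rw [Multiset.sum_cons, ha] at this
        simp only [Multiset.card_cons] at this
        push_cast at this
        linarith

private lemma map_pow_comm (M : Matrix (Fin n) (Fin n) ℤ) {S : Type*} [CommRing S] (s : ℕ) :
    (M ^ s).map ((Int.castRingHom S) : ℤ → S) = (M.map ((Int.castRingHom S) : ℤ → S)) ^ s := by
  rw [← RingHom.mapMatrix_apply, ← RingHom.mapMatrix_apply, map_pow]

end Helpers

/-- An integer matrix `A ∈ GLₙ(ℤ)` all of whose complex eigenvalues lie on the unit
circle and whose reduction modulo 3 is the identity matrix is unipotent: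
`(A - I)^n = 0`. -/
theorem polynomially_growing_trivial_mod_three_unipotent {n : ℕ}
    (A : Matrix (Fin n) (Fin n) ℤ) (hA : IsUnit A.det)
    (heig : ∀ μ : ℂ, ((A.map ((↑) : ℤ → ℂ)).charpoly).IsRoot μ → ‖μ‖ = 1)
    (hmod : A.map ((↑) : ℤ → ZMod 3) = 1) :
    (A - 1) ^ n = 0 := by
  have hcastC : ((↑) : ℤ → ℂ) = ⇑(Int.castRingHom ℂ) := rfl
  have hcastZ : ((↑) : ℤ → ZMod 3) = ⇑(Int.castRingHom (ZMod 3)) := rfl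
  set Ac := A.map ((↑) : ℤ → ℂ) with hAc
  -- powers of A are ≡ 1 mod 3
  have hmodpow : ∀ s : ℕ, (A ^ s).map ((↑) : ℤ → ZMod 3) = 1 := by
    intro s
    rw [hcastZ, map_pow_comm, ← hcastZ, hmod, one_pow]
  have hmappow : ∀ s : ℕ, (A ^ s).map ((↑) : ℤ → ℂ) = Ac ^ s := by
    intro s
    rw [hcastC, map_pow_comm, hAc, hcastC]
  obtain ⟨B, hB⟩ := exists_B A hmod
  obtain ⟨D, hD⟩ := pow_cong B (2*n)
  rw [← hB] at hD
  set m : ℕ := 3 ^ (2*n) with hm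
  have hm0 : m ≠ 0 := pow_ne_zero _ (by norm_num)
  -- the trace of A^m
  have htr : (A ^ m).trace = n + (3:ℤ)^(2*n+1) * D.trace := by
    rw [hD, Matrix.trace_add, Matrix.trace_smul, Matrix.trace_one, smul_eq_mul]
    simp
  set Mc := Ac ^ m with hMc
  have hMcmap : Mc = (A ^ m).map ((↑) : ℤ → ℂ) := (hmappow m).symm
  have htrc : Mc.trace = (((A ^ m).trace : ℤ) : ℂ) := by
    rw [hMcmap]
    simp [Matrix.trace, Matrix.diag, Matrix.map_apply]
  set R := Mc.charpoly.roots with hR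
  have hcard : R.card = n := by
    have h := Polynomial.splits_iff_card_roots.mp (IsAlgClosed.splits Mc.charpoly)
    rw [Matrix.charpoly_natDegree_eq_dim] at h
    simpa using h
  have hsum : Mc.trace = R.sum := Matrix.trace_eq_sum_roots_charpoly Mc
  -- every root of charpoly of Mc has absolute value one
  have habs : ∀ ρ ∈ R, ‖ρ‖ = 1 := by
    intro ρ hρ
    have hroot : Mc.charpoly.IsRoot ρ := (Polynomial.mem_roots'.mp hρ).2
    have hdet : (Ac ^ m - ρ • 1).det = 0 := by
      rw [← (root_iff Mc ρ).mp hroot, hMc]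
    obtain ⟨σ, hσm, hσ⟩ := eig_pow_rev Ac hm0 ρ hdet
    have : ‖σ‖ = 1 := heig σ ((root_iff Ac σ).mpr hσ)
    rw [← hσm, norm_pow, this, one_pow]
  -- real part bounds give trace = n
  have hres : ((A ^ m).trace : ℝ) = (R.map Complex.re).sum := by
    have := congrArg Complex.re (htrc.symm.trans hsum)
    rw [← Complex.coe_reAddGroupHom, map_multiset_sum] at this
    simpa using this
  have hre_le : ∀ x ∈ R.map Complex.re, x ≤ 1 := by
    intro x hx
    obtain ⟨ρ, hρ, rfl⟩ := Multiset.mem_map.mp hx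
    calc ρ.re ≤ ‖ρ‖ := Complex.re_le_norm ρ
    _ = 1 := habs ρ hρ
  have hre_ge : ∀ x ∈ R.map Complex.re, -1 ≤ x := by
    intro x hx
    obtain ⟨ρ, hρ, rfl⟩ := Multiset.mem_map.mp hx
    have := Complex.abs_re_le_norm ρ
    rw [habs ρ hρ] at this
    linarith [abs_le.mp this]
  have hub : ((A ^ m).trace : ℝ) ≤ n := by
    rw [hres]
    have := Multiset.sum_le_card_nsmul (R.map Complex.re) 1 hre_le
    simpa [hcard] using this
  have hlb : -(n:ℝ) ≤ ((A ^ m).trace : ℝ) := by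
    rw [hres]
    have := Multiset.card_nsmul_le_sum (s := R.map Complex.re) (a := -1) hre_ge
    -- this : card • (-1) ≤ sum
    have hc : ((R.map Complex.re).card : ℝ) = n := by simp [hcard]
    calc -(n:ℝ) = (R.map Complex.re).card • (-1 : ℝ) := by rw [nsmul_eq_mul, hc]; ring
    _ ≤ _ := this
  have hub' : (A ^ m).trace ≤ n := by exact_mod_cast hub
  have hlb' : -(n:ℤ) ≤ (A ^ m).trace := by exact_mod_cast hlb
  have hNbig : (2*n : ℤ) < (3:ℤ)^(2*n+1) := by
    have := Nat.lt_pow_self (n := 2*n+1) (by norm_num : 1 < 3)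
    have h2 : (2*n+1 : ℤ) < (3:ℤ)^(2*n+1) := by exact_mod_cast this
    linarith
  have hD0 : D.trace = 0 := by
    have h9 : (0:ℤ) < 3^(2*n+1) := by positivity
    nlinarith [htr, hub', hlb', hNbig]
  have htrn : (A ^ m).trace = n := by rw [htr, hD0]; ring
  -- all roots of Mc are 1
  have hones : ∀ ρ ∈ R, ρ = 1 := by
    have hsum1 : ((R.map Complex.re).card : ℝ) ≤ (R.map Complex.re).sum := by
      rw [← hres, htrn]
      simp [hcard]
    intro ρ hρ
    have hre1 : ρ.re = 1 :=
      all_one_of_sum _ hre_le hsum1 ρ.re (Multiset.mem_map_of_mem _ hρ)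
    have habs1 := habs ρ hρ
    have him : ρ.im = 0 := by
      have h2 : Complex.normSq ρ = 1 := by
        rw [← Complex.sq_norm, habs1]; norm_num
      rw [Complex.normSq_apply, hre1] at h2
      nlinarith
    exact Complex.ext hre1 him
  -- every eigenvalue μ of A satisfies μ^m = 1
  have hAll : ∀ μ : ℂ, Ac.charpoly.IsRoot μ → μ ^ m = 1 := by
    intro μ hμ
    have hdet := eig_pow Ac hm0 μ ((root_iff Ac μ).mp hμ)
    have hroot : Mc.charpoly.IsRoot (μ ^ m) := by
      rw [root_iff, hMc]; exact hdet
    exact hones _ ((Polynomial.mem_roots (Mc.charpoly_monic.ne_zero)).mpr hroot)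
  -- descend: every eigenvalue of A equals 1
  have hone : ∀ j : ℕ, ∀ μ : ℂ, Ac.charpoly.IsRoot μ → μ ^ (3^j) = 1 → μ = 1 := by
    intro j
    induction j with
    | zero => intro μ _ h; simpa using h
    | succ j ih =>
        intro μ hμ hpow
        set ω := μ ^ (3^j) with hω
        have hω3 : ω ^ 3 = 1 := by
          rw [hω, ← pow_mul, ← pow_succ]
          exact hpow
        by_cases hω1 : ω = 1
        · exact ih μ hμ hω1
        · exfalso
          have hdet : (Ac ^ (3^j) - ω • 1).det = 0 :=
            eig_pow Ac (pow_ne_zero _ (by norm_num)) μ ((root_iff Ac μ).mp hμ)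
          obtain ⟨B', hB'⟩ := exists_B (A ^ (3^j)) (hmodpow _)
          have hdet' : ((A ^ (3^j)).map ((↑) : ℤ → ℂ) - ω • 1).det = 0 := by
            rw [hmappow]; exact hdet
          have hint := nu_integral _ _ hB' ω hdet'
          apply no_omega _ hint
          have h31 : (1 : ℂ) + 3 * ((ω - 1)/3) = ω := by ring
          rw [h31]
          have hfac : (ω - 1) * (ω^2 + ω + 1) = 0 := by linear_combination hω3
          rcases mul_eq_zero.mp hfac with h | h
          · exact absurd (by linear_combination h : ω = 1) hω1
          · exact h
  have hroots1 : ∀ ρ ∈ Ac.charpoly.roots, ρ = 1 := fun ρ hρ =>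
    hone (2*n) ρ ((Polynomial.mem_roots'.mp hρ).2) (hAll ρ ((Polynomial.mem_roots'.mp hρ).2))
  have hcardA : Ac.charpoly.roots.card = n := by
    have h := Polynomial.splits_iff_card_roots.mp (IsAlgClosed.splits Ac.charpoly)
    rw [Matrix.charpoly_natDegree_eq_dim] at h
    simpa using h
  have hchar : Ac.charpoly = (X - 1 : ℂ[X])^n := by
    have h1 : Ac.charpoly = (Ac.charpoly.roots.map fun ρ => X - C ρ).prod :=
      (IsAlgClosed.splits _).eq_prod_roots_of_monic Ac.charpoly_monic
    rw [h1, Multiset.map_congr rfl (fun ρ hρ => by rw [hroots1 ρ hρ] :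
      ∀ ρ ∈ Ac.charpoly.roots, ((X - C ρ : ℂ[X])) = (X - C 1 : ℂ[X]))]
    rw [Multiset.map_const', Multiset.prod_replicate, hcardA]
    simp
  have hcharZ : A.charpoly = (X - 1 : ℤ[X])^n := by
    apply Polynomial.map_injective (Int.castRingHom ℂ) Int.cast_injective
    rw [← Matrix.charpoly_map A (Int.castRingHom ℂ)]
    rw [show A.map ⇑(Int.castRingHom ℂ) = Ac from rfl, hchar]
    simp
  have hCH := A.aeval_self_charpoly
  rw [hcharZ] at hCH
  simpa using hCH
end

section
/- Let A be an n×n integer matrix that is invertible over ℤ (A ∈ GL_n(ℤ)) such that every complex eigenvalue of A has absolute value 1. Then there exists an integer N ≥ 1 such that A^N is unipotent, i.e. (A^N − I)^n = 0; equivalently, every complex eigenvalue of A is a root of unity. -/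
open Polynomial

/-- If all complex eigenvalues of an integer matrix `A ∈ GLₙ(ℤ)` lie on the unit circle,
then some positive power of `A` is unipotent: `(A^N - I)^n = 0` for some `N ≥ 1`
(equivalently, all eigenvalues of `A` are roots of unity). -/
theorem eigenvalues_on_unit_circle_power_unipotent {n : ℕ}
    (A : Matrix (Fin n) (Fin n) ℤ) (hA : IsUnit A.det)
    (heig : ∀ μ : ℂ, ((A.map ((↑) : ℤ → ℂ)).charpoly).IsRoot μ → ‖μ‖ = 1) :
    ∃ N : ℕ, 1 ≤ N ∧ (A ^ N - 1) ^ n = 0 := by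
  classical
  set B := A.map ((↑) : ℤ → ℂ) with hBdef
  set p := B.charpoly with hpdef
  have hBmap : B = A.map (Int.castRingHom ℂ) := rfl
  have hpmap : p = A.charpoly.map (Int.castRingHom ℂ) := by
    rw [hpdef, hBmap, Matrix.charpoly_map]
  have hmono : p.Monic := Matrix.charpoly_monic B
  -- Step 1: every root of p is a root of unity (Kronecker)
  have key : ∀ μ ∈ p.roots.toFinset, ∃ m : ℕ, 0 < m ∧ μ ^ m = 1 := by
    intro μ hμ
    rw [Multiset.mem_toFinset, mem_roots hmono.ne_zero] at hμ
    have hint : IsIntegral ℤ μ := ⟨A.charpoly, A.charpoly_monic, by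
      rw [← eval_map]
      have h2 : algebraMap ℤ ℂ = Int.castRingHom ℂ := rfl
      rw [h2, ← hpmap]; exact hμ⟩
    have halg : IsIntegral ℚ μ := hint.tower_top
    let K := IntermediateField.adjoin ℚ ({μ} : Set ℂ)
    haveI : FiniteDimensional ℚ K := IntermediateField.adjoin.finiteDimensional halg
    haveI : NumberField K := ⟨⟩
    set x : K := IntermediateField.AdjoinSimple.gen ℚ μ with hxdef
    have hxμ : algebraMap K ℂ x = μ := IntermediateField.AdjoinSimple.algebraMap_gen ℚ μ
    have hxi : IsIntegral ℤ x := by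
      rwa [← isIntegral_algebraMap_iff (algebraMap K ℂ).injective, hxμ]
    -- minpoly ℚ μ divides p over ℂ
    set q : ℚ[X] := A.charpoly.map (Int.castRingHom ℚ) with hqdef
    have hqp : q.map (algebraMap ℚ ℂ) = p := by
      rw [hqdef, hpmap, Polynomial.map_map]
      congr 1
    have hdvd : minpoly ℚ μ ∣ q := by
      apply minpoly.dvd
      rw [aeval_def, ← eval_map, hqp]
      exact hμ
    have hconj : ∀ φ : K →+* ℂ, ‖φ x‖ = 1 := by
      intro φ
      have hmem : φ x ∈ (minpoly ℚ x).rootSet ℂ := by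
        rw [← NumberField.Embeddings.range_eval_eq_rootSet_minpoly K ℂ x]
        exact ⟨φ, rfl⟩
      have hminx : minpoly ℚ x = minpoly ℚ μ := by
        rw [← hxμ]; exact (minpoly.algebraMap_eq (algebraMap K ℂ).injective x).symm
      rw [hminx, mem_rootSet] at hmem
      have hroot : p.IsRoot (φ x) := by
        obtain ⟨r, hr⟩ := hdvd
        have : aeval (φ x) q = 0 := by rw [hr, map_mul, hmem.2, zero_mul]
        rw [aeval_def, ← eval_map, hqp] at this
        exact this
      have := heig (φ x) hroot
      exact this
    obtain ⟨m, hm, hxm⟩ := NumberField.Embeddings.pow_eq_one_of_norm_eq_one K ℂ hxi hconj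
    refine ⟨m, hm, ?_⟩
    have := congrArg (algebraMap K ℂ) hxm
    rwa [map_pow, hxμ, map_one] at this
  choose! m hmpos hmone using key
  set R := p.roots.toFinset with hRdef
  refine ⟨∏ μ ∈ R, m μ, ?_, ?_⟩
  · exact Nat.one_le_iff_ne_zero.mpr (Finset.prod_ne_zero_iff.mpr fun μ hμ => (hmpos μ hμ).ne')
  set N := ∏ μ ∈ R, m μ with hNdef
  -- every root of p satisfies μ^N = 1
  have hrootN : ∀ μ ∈ p.roots, μ ^ N = 1 := by
    intro μ hμ
    have hμR : μ ∈ R := Multiset.mem_toFinset.mpr hμ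
    obtain ⟨c, hc⟩ := Finset.dvd_prod_of_mem m hμR
    rw [hNdef, hc, pow_mul, hmone μ hμR, one_pow]
  -- p divides (X^N - 1)^n over ℂ
  have hsplits : p.Splits := IsAlgClosed.splits p
  have hdeg : p.natDegree = n := by
    rw [hpdef, Matrix.charpoly_natDegree_eq_dim, Fintype.card_fin]
  have hcard : p.roots.card = n := by
    rw [(splits_iff_card_roots).mp hsplits, hdeg]
  have hpdvd : p ∣ ((X : ℂ[X]) ^ N - 1) ^ n := by
    have hfac : p = (p.roots.map fun a => X - C a).prod :=
      hsplits.eq_prod_roots_of_monic hmono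
    rw [hfac]
    have : (p.roots.map fun a => X - C a).prod ∣
        (p.roots.map fun _ => ((X : ℂ[X]) ^ N - 1)).prod := by
      apply Multiset.prod_dvd_prod_of_dvd
      intro a ha
      rw [dvd_iff_isRoot]
      simp [IsRoot, hrootN a ha]
    rwa [Multiset.map_const', Multiset.prod_replicate, hcard] at this
  -- Cayley–Hamilton over ℂ
  have hBzero : (B ^ N - 1) ^ n = 0 := by
    obtain ⟨r, hr⟩ := hpdvd
    have h1 : aeval B (((X : ℂ[X]) ^ N - 1) ^ n) = 0 := by
      rw [hr, map_mul, Matrix.aeval_self_charpoly, zero_mul]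
    rwa [map_pow, map_sub, map_pow, aeval_X, map_one] at h1
  -- descend to ℤ
  have hmapeq : ((A ^ N - 1) ^ n).map (Int.castRingHom ℂ) = (B ^ N - 1) ^ n := by
    have := congrArg (fun M => M) hBmap
    rw [← RingHom.mapMatrix_apply, map_pow, map_sub, map_pow, map_one,
      RingHom.mapMatrix_apply, ← hBmap]
  have h0 : ((A ^ N - 1) ^ n).map (Int.castRingHom ℂ) = 0 := by rw [hmapeq, hBzero]
  ext i j
  simp only [Matrix.zero_apply]
  have h1 := congrFun (congrFun h0 i) j
  simp only [Matrix.map_apply, Matrix.zero_apply] at h1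
  rw [eq_intCast] at h1; exact_mod_cast h1
end

section
/- Let V be a free ℤ-module of finite rank m and F : V → V a ℤ-module endomorphism. Then the following are equivalent: (1) V has a basis b_1, …, b_m such that F(b_i) − b_i lies in the submodule generated by b_1, …, b_{i−1} for every i (i.e. F is upper triangular with 1's on the diagonal with respect to this basis); (2) (id − F)^k = 0 for some k > 0. -/
theorem aux_nilpotent_triangular (R : Type) [CommRing R] [IsDomain R]
    [IsPrincipalIdealRing R] :
    ∀ (m : ℕ) (V : Type) [AddCommGroup V] [Module R V] (bV : Module.Basis (Fin m) R V)
      (N : Module.End R V), IsNilpotent N →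
      ∃ b : Module.Basis (Fin m) R V, ∀ i : Fin m,
        N (b i) ∈ Submodule.span R (b '' {j : Fin m | j < i}) := by
  intro m
  induction m using Nat.strong_induction_on with
  | _ m ih =>
  intro V _ _ bV N hN
  classical
  by_cases hN0 : N = 0
  · exact ⟨bV, fun i => by simp [hN0]⟩
  -- kernel is nontrivial
  set K := LinearMap.ker N with hK
  have hKne : ∃ x : V, x ≠ 0 ∧ N x = 0 := by
    obtain ⟨n, hn⟩ := hN
    obtain ⟨w, hw⟩ : ∃ w, N w ≠ 0 := by
      by_contra h
      push_neg at h
      exact hN0 (LinearMap.ext fun x => h x)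
    have hex : ∃ t, (N ^ t) w = 0 := ⟨n, by rw [hn]; rfl⟩
    set t := Nat.find hex with ht
    have htz : (N ^ t) w = 0 := Nat.find_spec hex
    have ht2 : 2 ≤ t := by
      rcases Nat.lt_or_ge t 2 with h | h
      · interval_cases t
        · exact absurd htz (by simpa using fun h0 => hw (by rw [h0]; simp))
        · simp [pow_one] at htz; exact absurd htz hw
      · exact h
    refine ⟨(N ^ (t - 1)) w, Nat.find_min hex (by omega), ?_⟩
    have hts : t - 1 + 1 = t := by omega
    have : N ((N ^ (t - 1)) w) = (N ^ (t - 1 + 1)) w := by rw [pow_succ']; rfl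
    rw [this, hts, htz]
  -- bases of the kernel and the quotient
  obtain ⟨d, bK⟩ := Submodule.basisOfPid bV K
  obtain ⟨r, bR⟩ := Submodule.basisOfPid bV (LinearMap.range N)
  let eQR := LinearMap.quotKerEquivRange N
  let bQ := bR.map eQR.symm
  haveI : Module.Free R (V ⧸ K) := Module.Free.of_basis bQ
  -- a section of the quotient map
  obtain ⟨s, hs⟩ := Module.projective_lifting_property K.mkQ (LinearMap.id)
    (Submodule.mkQ_surjective K)
  have hs' : ∀ q, K.mkQ (s q) = q := fun q => by
    have := LinearMap.ext_iff.mp hs q; simpa using this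
  -- the splitting equivalence
  have hmem : ∀ v : V, ((LinearMap.id : V →ₗ[R] V) - s ∘ₗ K.mkQ) v ∈ K := by
    intro v
    have h0 : K.mkQ (((LinearMap.id : V →ₗ[R] V) - s ∘ₗ K.mkQ) v) = 0 := by
      show K.mkQ v - K.mkQ (s (K.mkQ v)) = 0
      rw [hs', sub_self]
    have h1 : ((LinearMap.id : V →ₗ[R] V) - s ∘ₗ K.mkQ) v ∈ LinearMap.ker K.mkQ :=
      LinearMap.mem_ker.mpr h0
    simpa [Submodule.ker_mkQ] using h1
  let f := LinearMap.prod (LinearMap.codRestrict K ((LinearMap.id : V →ₗ[R] V) - s ∘ₗ K.mkQ) hmem) K.mkQ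
  let g := LinearMap.coprod K.subtype s
  have hgf : g ∘ₗ f = LinearMap.id := by
    ext v
    simp [f, g]
  have hfg : f ∘ₗ g = LinearMap.id := by
    apply LinearMap.ext
    rintro ⟨k, q⟩
    have hk : K.mkQ (k : V) = 0 := by
      rw [← LinearMap.mem_ker, Submodule.ker_mkQ]; exact k.2
    refine Prod.ext (Subtype.ext ?_) ?_
    · simp [f, g, hk, hs']
    · show K.mkQ ((k : V) + s q) = q
      rw [map_add, hk, hs', zero_add]
  let e : V ≃ₗ[R] (↥K × V ⧸ K) := LinearEquiv.ofLinear f g hfg hgf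
  have he : ∀ kq, e.symm kq = g kq := fun kq => rfl
  -- counting
  let B0 := (bK.prod bQ).map e.symm
  have hcard : d + r = m := by
    have e2 := B0.indexEquiv bV
    have := Fintype.card_congr e2
    simpa using this
  have hd : 0 < d := by
    rcases Nat.eq_zero_or_pos d with h0 | h
    · exfalso
      subst h0
      obtain ⟨x, hx, hxN⟩ := hKne
      haveI : Subsingleton K := bK.equivFun.toEquiv.subsingleton
      have : (⟨x, hxN⟩ : K) = 0 := Subsingleton.elim _ _
      exact hx (congrArg Subtype.val this)
    · exact h
  have hr : r < m := by omega
  -- induced endomorphism on the quotient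
  have hle : K ≤ K.comap N := by
    intro x hx
    simp only [hK, LinearMap.mem_ker] at hx
    simp [Submodule.mem_comap, hK, hx]
  let Nbar := Submodule.mapQ K K N hle
  have hcomm : ∀ v, Nbar (K.mkQ v) = K.mkQ (N v) := fun v => rfl
  have hkey : ∀ t (v : V), (Nbar ^ t) (K.mkQ v) = K.mkQ ((N ^ t) v) := by
    intro t
    induction t with
    | zero => intro v; simp
    | succ t iht =>
      intro v
      rw [pow_succ', pow_succ', Module.End.mul_apply, Module.End.mul_apply, iht, hcomm]
  have hNbar : IsNilpotent Nbar := by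
    obtain ⟨n, hn⟩ := hN
    refine ⟨n, ?_⟩
    apply LinearMap.ext
    intro q
    obtain ⟨v, rfl⟩ := Submodule.mkQ_surjective K q
    rw [hkey, hn]
    simp
  -- induction hypothesis on the quotient
  obtain ⟨c, hc⟩ := ih r hr (V ⧸ K) bQ Nbar hNbar
  -- assemble the new basis
  let B1 := (bK.prod c).map e.symm
  let eIdx : Fin d ⊕ Fin r ≃ Fin m := finSumFinEquiv.trans (finCongr hcard)
  let b := B1.reindex eIdx
  have hb : ∀ z, b (eIdx z) = B1 z := fun z => by
    rw [Module.Basis.reindex_apply, Equiv.symm_apply_apply]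
  have hB1inl : ∀ k, B1 (Sum.inl k) = (bK k : V) := by
    intro k
    have h1 : (bK.prod c) (Sum.inl k) = (bK k, 0) :=
      Prod.ext (Module.Basis.prod_apply_inl_fst _ _ _) (Module.Basis.prod_apply_inl_snd _ _ _)
    show e.symm ((bK.prod c) (Sum.inl k)) = _
    rw [h1, he]
    show (bK k : V) + s 0 = _
    simp
  have hB1inr : ∀ j, B1 (Sum.inr j) = s (c j) := by
    intro j
    have h1 : (bK.prod c) (Sum.inr j) = (0, c j) :=
      Prod.ext (Module.Basis.prod_apply_inr_fst _ _ _) (Module.Basis.prod_apply_inr_snd _ _ _)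
    show e.symm ((bK.prod c) (Sum.inr j)) = _
    rw [h1, he]
    show ((0 : K) : V) + s (c j) = _
    simp
  refine ⟨b, ?_⟩
  intro i
  obtain ⟨z, rfl⟩ := eIdx.surjective i
  have hvinl : ∀ k : Fin d, ((eIdx (Sum.inl k)) : ℕ) = (k : ℕ) := by
    intro k; simp [eIdx]
  have hvinr : ∀ j : Fin r, ((eIdx (Sum.inr j)) : ℕ) = d + (j : ℕ) := by
    intro j; simp [eIdx]
  cases z with
  | inl k =>
    rw [hb, hB1inl]
    have hz : N (bK k : V) = 0 := (bK k).2
    rw [hz]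
    exact Submodule.zero_mem _
  | inr j =>
    rw [hb, hB1inr]
    set W := Submodule.span R (b '' {i' | i' < eIdx (Sum.inr j)}) with hW
    have hmem1 : ∀ k : Fin d, (bK k : V) ∈ W := by
      intro k
      apply Submodule.subset_span
      refine ⟨eIdx (Sum.inl k), ?_, by rw [hb, hB1inl]⟩
      show eIdx (Sum.inl k) < eIdx (Sum.inr j)
      rw [Fin.lt_def, hvinl, hvinr]
      have := k.isLt
      omega
    have hmem2 : ∀ j' : Fin r, j' < j → s (c j') ∈ W := by
      intro j' hj'
      apply Submodule.subset_span
      refine ⟨eIdx (Sum.inr j'), ?_, by rw [hb, hB1inr]⟩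
      show eIdx (Sum.inr j') < eIdx (Sum.inr j)
      rw [Fin.lt_def, hvinr, hvinr]
      have := Fin.lt_def.mp hj'
      omega
    have hKle : K ≤ W := by
      intro x hx
      have hx1 : (⟨x, hx⟩ : K) ∈ Submodule.span R (Set.range bK) := by
        rw [bK.span_eq]; trivial
      have hx2 : x ∈ Submodule.map K.subtype (Submodule.span R (Set.range bK)) :=
        ⟨⟨x, hx⟩, hx1, rfl⟩
      rw [Submodule.map_span] at hx2
      refine Submodule.span_le.mpr ?_ hx2
      rintro _ ⟨_, ⟨k, rfl⟩, rfl⟩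
      exact hmem1 k
    have hq : K.mkQ (N (s (c j))) = Nbar (c j) := by
      rw [← hcomm, hs']
    have hcj := hc j
    have himg : c '' {j' : Fin r | j' < j}
        = K.mkQ '' ((fun j' => s (c j')) '' {j' : Fin r | j' < j}) := by
      rw [Set.image_image]
      exact Set.image_congr fun j' _ => (hs' (c j')).symm
    rw [himg, ← Submodule.map_span, ← hq] at hcj
    obtain ⟨y, hy, hyx⟩ := hcj
    have hyW : y ∈ W := by
      refine Submodule.span_le.mpr ?_ hy
      rintro _ ⟨j', hj', rfl⟩
      exact hmem2 j' hj'
    have hdiff : N (s (c j)) - y ∈ K := by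
      have h0 : K.mkQ (N (s (c j)) - y) = 0 := by rw [map_sub, hyx, sub_self]
      have h2 : N (s (c j)) - y ∈ LinearMap.ker K.mkQ := LinearMap.mem_ker.mpr h0
      simpa [Submodule.ker_mkQ] using h2
    have hfinal := W.add_mem hyW (hKle hdiff)
    simpa using hfinal

/-- Characterization of unipotent endomorphisms of a free `ℤ`-module `V` of finite rank
`m`: an endomorphism `F` admits a basis `b₁, …, bₘ` with respect to which it is upper
triangular with 1's on the diagonal (i.e. `F(bᵢ) - bᵢ` lies in the span of
`b₁, …, b_{i-1}`) if and only if `(id - F)^k = 0` for some `k > 0`. -/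
theorem unipotent_iff_upper_triangular (m : ℕ) (V : Type) [AddCommGroup V] [Module ℤ V]
    (bV : Module.Basis (Fin m) ℤ V) (F : Module.End ℤ V) :
    (∃ b : Module.Basis (Fin m) ℤ V, ∀ i : Fin m,
        F (b i) - b i ∈ Submodule.span ℤ (b '' {j : Fin m | j < i})) ↔
      (∃ k : ℕ, 0 < k ∧ ((1 : Module.End ℤ V) - F) ^ k = 0) := by
  constructor
  · rintro ⟨b, hb⟩
    set N := (1 : Module.End ℤ V) - F with hN
    have hNb : ∀ i : Fin m, N (b i) ∈ Submodule.span ℤ (b '' {j : Fin m | j < i}) := by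
      intro i
      have : N (b i) = -(F (b i) - b i) := by
        simp [hN, LinearMap.sub_apply]
      rw [this]
      exact Submodule.neg_mem _ (hb i)
    have key : ∀ t : ℕ, ∀ x ∈ Submodule.span ℤ (b '' {j : Fin m | (j : ℕ) < t}),
        (N ^ t) x = 0 := by
      intro t
      induction t with
      | zero =>
        intro x hx
        have hempty : {j : Fin m | (j : ℕ) < 0} = ∅ := by
          ext j; simp
        rw [hempty, Set.image_empty, Submodule.span_empty, Submodule.mem_bot] at hx
        simp [hx]
      | succ t iht =>
        intro x hx
        have hstep : Submodule.span ℤ (b '' {j : Fin m | (j : ℕ) < t + 1}) ≤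
            (Submodule.span ℤ (b '' {j : Fin m | (j : ℕ) < t})).comap N := by
          apply Submodule.span_le.mpr
          rintro _ ⟨j, hj, rfl⟩
          simp only [SetLike.mem_coe, Submodule.mem_comap]
          refine Submodule.span_mono ?_ (hNb j)
          rintro _ ⟨j', hj', rfl⟩
          exact ⟨j', by simp only [Set.mem_setOf_eq] at hj hj' ⊢; have := Fin.lt_def.mp hj'; omega, rfl⟩
        have hNx := hstep hx
        rw [pow_succ, Module.End.mul_apply]
        exact iht _ hNx
    refine ⟨m + 1, Nat.succ_pos m, ?_⟩
    apply LinearMap.ext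
    intro x
    have hx : x ∈ Submodule.span ℤ (b '' {j : Fin m | (j : ℕ) < m}) := by
      have huniv : {j : Fin m | (j : ℕ) < m} = Set.univ := by
        ext j; simp [j.isLt]
      rw [huniv, Set.image_univ, b.span_eq]
      trivial
    rw [pow_succ', Module.End.mul_apply, key m x hx]
    simp
  · rintro ⟨k, -, hk⟩
    obtain ⟨b, hb⟩ := aux_nilpotent_triangular ℤ m V bV ((1 : Module.End ℤ V) - F) ⟨k, hk⟩
    refine ⟨b, fun i => ?_⟩
    have : F (b i) - b i = -(((1 : Module.End ℤ V) - F) (b i)) := by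
      simp [LinearMap.sub_apply]
    rw [this]
    exact Submodule.neg_mem _ (hb i)
end

section
/- Let V be a free ℤ-module of finite rank and F : V → V a unipotent endomorphism, i.e. (id − F)^k = 0 for some k > 0. If x ∈ V is F-periodic, i.e. F^m(x) = x for some m ≥ 1, then x is F-fixed: F(x) = x. -/
/-- If `F` is a unipotent endomorphism of a free `ℤ`-module of finite rank (i.e.
`(id - F)^k = 0` for some `k > 0`) and `x` is `F`-periodic (`F^m(x) = x` for some
`m ≥ 1`), then `x` is `F`-fixed: `F(x) = x`. -/
theorem unipotent_periodic_is_fixed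
    (V : Type) [AddCommGroup V] [Module ℤ V] [Module.Free ℤ V] [Module.Finite ℤ V]
    (F : Module.End ℤ V)
    (hF : ∃ k : ℕ, 0 < k ∧ ((1 : Module.End ℤ V) - F) ^ k = 0)
    (x : V) (m : ℕ) (hm : 1 ≤ m) (hx : (F ^ m) x = x) :
    F x = x := by
  obtain ⟨k, hk0, hk⟩ := hF
  set N : Module.End ℤ V := F - 1 with hN
  have hNk : N ^ k = 0 := by
    have h1 : N = -(1 - F) := by rw [hN, neg_sub]
    rw [h1, neg_pow, hk, mul_zero]
  set B : Module.End ℤ V := ∑ i ∈ Finset.range m, ∑ j ∈ Finset.range i, F ^ j with hB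
  have hFB : Commute F B := by
    apply Commute.sum_right; intro i _
    apply Commute.sum_right; intro j _
    exact (Commute.refl F).pow_right j
  have hcomm : Commute B N := by
    rw [hN]
    exact (hFB.symm).sub_right (Commute.one_right B)
  set y : V := F x - x with hy
  have hgeom : (∑ i ∈ Finset.range m, F ^ i) y = 0 := by
    have h1 : ((∑ i ∈ Finset.range m, F ^ i) * (F - 1)) x = 0 := by
      rw [geom_sum_mul]
      simp [LinearMap.sub_apply, hx]
    simpa [Module.End.mul_apply, LinearMap.sub_apply, hy] using h1
  have hA : (∑ i ∈ Finset.range m, F ^ i) = B * N + (m : ℕ) • (1 : Module.End ℤ V) := by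
    have h2 : ∑ i ∈ Finset.range m, F ^ i
        = ∑ i ∈ Finset.range m, ((∑ j ∈ Finset.range i, F ^ j) * N + 1) := by
      apply Finset.sum_congr rfl
      intro i _
      rw [hN, geom_sum_mul, sub_add_cancel]
    rw [h2, Finset.sum_add_distrib, ← Finset.sum_mul, ← hB, Finset.sum_const,
      Finset.card_range]
  have hmy : (m : ℕ) • y = (-(B * N)) y := by
    have h3 : (B * N) y + (m : ℕ) • y = 0 := by
      have := hgeom
      rw [hA] at this
      simpa [LinearMap.add_apply, LinearMap.smul_apply] using this
    rw [LinearMap.neg_apply, add_comm] at *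
    exact eq_neg_of_add_eq_zero_left h3
  have key : ∀ n : ℕ, (m ^ n : ℕ) • y = ((-(B * N)) ^ n) y := by
    intro n
    induction n with
    | zero => simp
    | succ n ih =>
      rw [pow_succ (-(B * N)), Module.End.mul_apply, ← hmy, map_nsmul, ← ih,
        pow_succ, mul_comm, mul_smul]
  have hCk : (-(B * N)) ^ k = 0 := by
    rw [neg_pow, hcomm.mul_pow, hNk, mul_zero, mul_zero]
  have hzero : (m ^ k : ℕ) • y = 0 := by
    rw [key k, hCk]; rfl
  have hne : ((m ^ k : ℕ) : ℤ) ≠ 0 := by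
    simp only [ne_eq, Int.natCast_eq_zero, pow_eq_zero_iff hk0.ne']
    omega
  have hy0 : y = 0 := by
    let b := Module.Free.chooseBasis ℤ V
    have hrepr : b.repr y = 0 := by
      ext i
      have h2 : (m ^ k : ℕ) • b.repr y i = 0 := by
        have := congrArg (fun v : V => b.repr v i) hzero
        simpa using this
      have h3 : ((m ^ k : ℕ) : ℤ) * b.repr y i = 0 := by
        rw [← nsmul_eq_mul]; exact h2
      simpa using (mul_eq_zero.mp h3).resolve_left hne
    exact (LinearEquiv.map_eq_zero_iff b.repr).mp hrepr
  have := sub_eq_zero.mp (hy ▸ hy0)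
  exact this
end

section
/- Let V be a free ℤ-module of finite rank and F : V → V a unipotent endomorphism, i.e. (id − F)^k = 0 for some k > 0. Let W be a submodule of V that is a direct summand (there exists a submodule W' with V = W ⊕ W') and is F-periodic in the sense that the image F^m(W) equals W for some m ≥ 1. Then W is F-invariant: F(W) = W. -/
open Polynomial

/-- Binomial expansion to second order. -/
lemma one_add_pow_aux' {A : Type*} [CommRing A] (a : A) :
    ∀ m : ℕ, ∃ h : A, (1 + a) ^ m = 1 + (m : A) * a + a ^ 2 * h := by
  intro m
  induction m with
  | zero => exact ⟨0, by simp⟩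
  | succ m ih =>
    obtain ⟨h, ih⟩ := ih
    refine ⟨(m : A) + h + a * h, ?_⟩
    rw [pow_succ, ih]
    push_cast
    ring

/-- In a commutative ring generated (as a ℤ-algebra) by a nilpotent element `n`,
some positive multiple of `1 + n` lies in the subgroup generated by the powers
of `(1+n)^m`. -/
lemma key_lemma' {A : Type*} [CommRing A] (n : A) (k m : ℕ) (hm : 0 < m)
    (hn : n ^ k = 0) (hgen : ∀ w : A, ∃ p : Polynomial ℤ, aeval n p = w) :
    ∃ c : ℕ, 0 < c ∧
      (c : A) * (1 + n) ∈ AddSubgroup.closure (Set.range fun j => ((1 + n) ^ m) ^ j) := by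
  set u : A := (1 + n) ^ m with hu
  set M : Submodule ℤ A := Submodule.span ℤ (Set.range fun j => u ^ j) with hM
  have hpowM : ∀ j : ℕ, u ^ j ∈ M := fun j => Submodule.subset_span ⟨j, rfl⟩
  -- M is closed under multiplication
  have hmulpow : ∀ j : ℕ, ∀ b ∈ M, u ^ j * b ∈ M := by
    intro j b hb
    induction hb using Submodule.span_induction with
    | mem x hx => obtain ⟨l, rfl⟩ := hx; rw [← pow_add]; exact hpowM _
    | zero => rw [mul_zero]; exact M.zero_mem
    | add x y _ _ hx hy => rw [mul_add]; exact M.add_mem hx hy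
    | smul z x _ hx => rw [mul_smul_comm]; exact M.smul_mem z hx
  have hmul : ∀ a ∈ M, ∀ b ∈ M, a * b ∈ M := by
    intro a ha
    induction ha using Submodule.span_induction with
    | mem x hx => obtain ⟨l, rfl⟩ := hx; exact hmulpow l
    | zero => intro b hb; rw [zero_mul]; exact M.zero_mem
    | add x y _ _ hx hy => intro b hb; rw [add_mul]; exact M.add_mem (hx b hb) (hy b hb)
    | smul z x _ hx => intro b hb; rw [smul_mul_assoc]; exact M.smul_mem z (hx b hb)
  have hpow : ∀ a ∈ M, ∀ i : ℕ, a ^ i ∈ M := by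
    intro a ha i
    induction i with
    | zero => simpa using hpowM 0
    | succ i ih => rw [pow_succ]; exact hmul _ ih _ ha
  have huM : u - 1 ∈ M := M.sub_mem (by simpa using hpowM 1) (by simpa using hpowM 0)
  -- the saturation of M
  set Msat : Submodule ℤ A :=
    { carrier := {w | ∃ c : ℕ, 0 < c ∧ (c : ℤ) • w ∈ M}
      add_mem' := by
        rintro a b ⟨c₁, hc₁, h₁⟩ ⟨c₂, hc₂, h₂⟩
        refine ⟨c₁ * c₂, Nat.mul_pos hc₁ hc₂, ?_⟩
        have : ((c₁ * c₂ : ℕ) : ℤ) • (a + b)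
            = (c₂ : ℤ) • ((c₁ : ℤ) • a) + (c₁ : ℤ) • ((c₂ : ℤ) • b) := by
          push_cast
          rw [smul_smul, smul_smul, smul_add]
          ring_nf
        rw [this]
        exact M.add_mem (M.smul_mem _ h₁) (M.smul_mem _ h₂)
      zero_mem' := ⟨1, one_pos, by simpa using M.zero_mem⟩
      smul_mem' := by
        rintro z a ⟨c, hc, h⟩
        exact ⟨c, hc, by rw [smul_comm]; exact M.smul_mem z h⟩ } with hMsat
  have hsat : ∀ (c : ℕ), 0 < c → ∀ w : A, (c : ℤ) • w ∈ Msat → w ∈ Msat := by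
    rintro c hc w ⟨c', hc', h⟩
    refine ⟨c' * c, Nat.mul_pos hc' hc, ?_⟩
    rw [show ((c' * c : ℕ) : ℤ) • w = (c' : ℤ) • ((c : ℤ) • w) by push_cast; rw [smul_smul]]
    exact h
  have hMle : ∀ a ∈ M, a ∈ Msat := fun a ha => ⟨1, one_pos, by simpa using ha⟩
  -- u - 1 = n * (m + n * h)
  obtain ⟨h, hh⟩ := one_add_pow_aux' n m
  have hu1 : u - 1 = n * ((m : A) + n * h) := by rw [hu, hh]; ring
  -- main downward induction
  have hind : ∀ j : ℕ, ∀ i : ℕ, k ≤ i + j → n ^ i ∈ Msat := by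
    intro j
    induction j with
    | zero =>
      intro i hi
      obtain ⟨d, rfl⟩ : ∃ d, i = k + d := ⟨i - k, by omega⟩
      rw [pow_add, hn, zero_mul]
      exact Msat.zero_mem
    | succ j ih =>
      intro i hi
      by_cases hik : k ≤ i
      · obtain ⟨d, rfl⟩ : ∃ d, i = k + d := ⟨i - k, by omega⟩
        rw [pow_add, hn, zero_mul]
        exact Msat.zero_mem
      · obtain ⟨t, ht⟩ := sub_dvd_pow_sub_pow ((m : A) + n * h) (m : A) i
        have htail : ∀ w : A, n ^ (i + 1) * w ∈ Msat := by
          intro w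
          obtain ⟨p, rfl⟩ := hgen w
          rw [aeval_eq_sum_range, Finset.mul_sum]
          apply Submodule.sum_mem
          intro d _
          rw [mul_smul_comm, ← pow_add]
          exact Msat.smul_mem _ (ih (i + 1 + d) (by omega))
        have hkey : ((m ^ i : ℕ) : ℤ) • n ^ i = (u - 1) ^ i - n ^ (i + 1) * (h * t) := by
          have h2 : ((m : A) + n * h) ^ i = (m : A) ^ i + (n * h) * t := by
            have heq : ((m : A) + n * h) - (m : A) = n * h := by ring
            rw [heq] at ht
            linear_combination ht
          rw [hu1, mul_pow, h2]
          push_cast [zsmul_eq_mul]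
          ring
        have hmem : ((m ^ i : ℕ) : ℤ) • n ^ i ∈ Msat := by
          rw [hkey]
          exact Msat.sub_mem (hMle _ (hpow _ huM i)) (htail _)
        exact hsat _ (pow_pos hm i) _ hmem
  have h1n : (1 : A) + n ∈ Msat :=
    Msat.add_mem (hMle _ (by simpa using hpowM 0)) (by simpa using hind k 1 (by omega))
  obtain ⟨c, hc, hmem⟩ := h1n
  refine ⟨c, hc, ?_⟩
  have hcast : (c : A) * (1 + n) = (c : ℤ) • (1 + n) := by
    rw [zsmul_eq_mul]
    push_cast
    ring
  rw [hcast, ← Submodule.span_int_eq_addSubgroupClosure]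
  exact hmem

/-- If `F` is a unipotent endomorphism of a free `ℤ`-module of finite rank (i.e.
`(id - F)^k = 0` for some `k > 0`) and `W` is a direct summand of `V` that is
`F`-periodic (`F^m(W) = W` for some `m ≥ 1`), then `W` is `F`-invariant: `F(W) = W`. -/
theorem unipotent_periodic_summand_is_invariant
    (V : Type) [AddCommGroup V] [Module ℤ V] [Module.Free ℤ V] [Module.Finite ℤ V]
    (F : Module.End ℤ V)
    (hF : ∃ k : ℕ, 0 < k ∧ ((1 : Module.End ℤ V) - F) ^ k = 0)
    (W : Submodule ℤ V) (hsummand : ∃ W' : Submodule ℤ V, IsCompl W W')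
    (m : ℕ) (hm : 1 ≤ m) (hW : Submodule.map ((F ^ m : Module.End ℤ V) : V →ₗ[ℤ] V) W = W) :
    Submodule.map (F : V →ₗ[ℤ] V) W = W := by
  obtain ⟨k, hk, hFk⟩ := hF
  have hNk : (F - 1) ^ k = 0 := by
    rw [show F - 1 = -(1 - F) from (neg_sub _ _).symm, neg_pow, hFk, mul_zero]
  set I : Ideal (Polynomial ℤ) := Ideal.span {(X : Polynomial ℤ) ^ k} with hI
  set π : Polynomial ℤ →ₐ[ℤ] (Polynomial ℤ ⧸ I) := Ideal.Quotient.mkₐ ℤ I with hπ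
  set x : Polynomial ℤ ⧸ I := π X with hx
  have hn : x ^ k = 0 := by
    rw [hx, ← map_pow, hπ, Ideal.Quotient.mkₐ_eq_mk, Ideal.Quotient.eq_zero_iff_mem]
    exact Ideal.subset_span rfl
  have hgen : ∀ w : Polynomial ℤ ⧸ I, ∃ p : Polynomial ℤ, aeval x p = w := by
    intro w
    obtain ⟨p, rfl⟩ := Ideal.Quotient.mkₐ_surjective ℤ I w
    exact ⟨p, by rw [hx, aeval_algHom_apply, aeval_X_left_apply]⟩
  obtain ⟨c, hc, hmem⟩ := key_lemma' x k m hm hn hgen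
  -- the evaluation map to End
  have hker : ∀ a ∈ I, aeval (F - 1) a = 0 := by
    intro a ha
    rw [hI, Ideal.mem_span_singleton] at ha
    obtain ⟨b, rfl⟩ := ha
    rw [map_mul, map_pow, aeval_X, hNk, zero_mul]
  set ψ : (Polynomial ℤ ⧸ I) →ₐ[ℤ] Module.End ℤ V :=
    Ideal.Quotient.liftₐ I (aeval (F - 1)) hker with hψ
  have hψx : ψ (1 + x) = F := by
    rw [map_add, map_one, hx, hψ, hπ, Ideal.Quotient.mkₐ_eq_mk, Ideal.Quotient.liftₐ_apply]
    erw [Ideal.Quotient.lift_mk]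
    simp only [AlgHom.coe_toRingHom, aeval_X]
    abel
  -- powers of F^m preserve W
  have hG : ∀ w ∈ W, (F ^ m) w ∈ W := by
    intro w hw
    rw [← hW]
    exact Submodule.mem_map_of_mem hw
  have hGpow : ∀ j : ℕ, ∀ w ∈ W, ((F ^ m) ^ j) w ∈ W := by
    intro j
    induction j with
    | zero => intro w hw; simpa using hw
    | succ j ih =>
      intro w hw
      rw [pow_succ, Module.End.mul_apply]
      exact ih _ (hG w hw)
  -- every element of the closure maps W into W
  have hS : ∀ z ∈ AddSubgroup.closure (Set.range fun j : ℕ => ((1 + x) ^ m) ^ j),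
      ∀ w ∈ W, ψ z w ∈ W := by
    intro z hz
    induction hz using AddSubgroup.closure_induction with
    | mem z hz =>
      obtain ⟨j, rfl⟩ := hz
      intro w hw
      rw [map_pow, map_pow, hψx]
      exact hGpow j w hw
    | zero => intro w hw; rw [map_zero]; simpa using W.zero_mem
    | add a b _ _ ha hb =>
      intro w hw
      rw [map_add, LinearMap.add_apply]
      exact W.add_mem (ha w hw) (hb w hw)
    | neg a _ ha =>
      intro w hw
      rw [map_neg, LinearMap.neg_apply]
      exact W.neg_mem (ha w hw)
  have hcF : ∀ w ∈ W, c • F w ∈ W := by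
    intro w hw
    have h1 := hS _ hmem w hw
    rwa [map_mul, map_natCast, hψx, Module.End.mul_apply, Module.End.natCast_apply] at h1
  -- saturation: W is a direct summand, so c • v ∈ W implies v ∈ W
  obtain ⟨W', hcompl⟩ := hsummand
  have hsatW : ∀ v : V, c • v ∈ W → v ∈ W := by
    intro v hv
    have hv' : v ∈ W ⊔ W' := by rw [hcompl.sup_eq_top]; trivial
    rw [Submodule.mem_sup] at hv'
    obtain ⟨w, hw, w', hw', rfl⟩ := hv'
    have h1 : c • w' ∈ W := by
      have heq : c • w' = c • (w + w') - c • w := by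
        rw [nsmul_add]; abel
      rw [heq]
      exact W.sub_mem hv (nsmul_mem hw c)
    have h2 : c • w' ∈ W ⊓ W' := ⟨h1, nsmul_mem hw' c⟩
    rw [hcompl.inf_eq_bot] at h2
    have h3 : c • w' = 0 := h2
    have inst := (Module.isTorsionFree_iff_smul_eq_zero (R := ℤ) (M := V)).1 inferInstance
    have hb := Nat.cast_smul_eq_nsmul ℤ c w'
    have h4 : w' = 0 := by
      rcases inst _ _ (hb.trans h3) with hh | hh
      · exact absurd hh (by exact_mod_cast hc.ne')
      · exact hh
    rw [h4, add_zero]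
    exact hw
  have hFW : Submodule.map (F : V →ₗ[ℤ] V) W ≤ W := by
    rintro _ ⟨w, hw, rfl⟩
    exact hsatW _ (hcF w hw)
  -- powers of F map W into W
  have hFpow : ∀ j : ℕ, Submodule.map ((F ^ j : Module.End ℤ V) : V →ₗ[ℤ] V) W ≤ W := by
    intro j
    induction j with
    | zero => rintro _ ⟨w, hw, rfl⟩; simpa using hw
    | succ j ih =>
      rintro _ ⟨w, hw, rfl⟩
      rw [pow_succ, Module.End.mul_apply]
      exact ih ⟨F w, hFW ⟨w, hw, rfl⟩, rfl⟩
  refine le_antisymm hFW ?_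
  conv_lhs => rw [← hW]
  obtain ⟨s, rfl⟩ : ∃ s, m = s + 1 := ⟨m - 1, by omega⟩
  rintro _ ⟨w, hw, rfl⟩
  rw [pow_succ', Module.End.mul_apply]
  exact ⟨(F ^ s) w, hFpow s ⟨w, hw, rfl⟩, rfl⟩
end

section
/- Let H be a nontrivial finitely generated subgroup of the free group F_n that is primitive: for every γ ∈ F_n and every integer k ≥ 1, if γ^k ∈ H then γ ∈ H. Then the normalizer of H in F_n equals H. -/
namespace PrimNorm

open Finsupp Subgroup Multiplicative

noncomputable section

abbrev A : Type := ℤ →₀ ℤ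

def shiftE (k : ℤ) : A ≃+ A := Finsupp.domCongr (Equiv.addRight k)

lemma shiftE_apply (k : ℤ) (f : A) (b : ℤ) : shiftE k f b = f (b - k) := by
  simp [shiftE, Finsupp.domCongr_apply, Finsupp.equivMapDomain_apply, sub_eq_add_neg]

lemma shiftE_comp (k l : ℤ) (f : A) : shiftE k (shiftE l f) = shiftE (k + l) f := by
  ext b
  simp only [shiftE_apply]
  congr 1
  ring

def ψ : Multiplicative ℤ →* MulAut (Multiplicative A) :=
  MonoidHom.mk' (fun k => AddEquiv.toMultiplicative (shiftE k.toAdd))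
    (by
      intro k l
      refine MulEquiv.ext fun a => ?_
      show Multiplicative.ofAdd (shiftE (k*l).toAdd a.toAdd)
          = Multiplicative.ofAdd (shiftE k.toAdd (shiftE l.toAdd a.toAdd))
      rw [shiftE_comp]
      rfl)

lemma ψ_apply (c : Multiplicative ℤ) (a : Multiplicative A) :
    ψ c a = Multiplicative.ofAdd (shiftE c.toAdd a.toAdd) := rfl

def ε : A →+ ℤ where
  toFun f := f.sum fun _ c => c
  map_zero' := Finsupp.sum_zero_index
  map_add' f g := Finsupp.sum_add_index' (h := fun _ c => c) (fun _ => rfl) (fun _ _ _ => rfl)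

lemma ε_apply (f : A) : ε f = f.sum fun _ c => c := rfl

lemma ε_shift (k : ℤ) (f : A) : ε (shiftE k f) = ε f := by
  rw [ε_apply, ε_apply]
  show (Finsupp.equivMapDomain (Equiv.addRight k) f).sum (fun _ c => c) = _
  rw [Finsupp.equivMapDomain_eq_mapDomain]
  exact Finsupp.sum_mapDomain_index (fun _ => rfl) (fun _ _ _ => rfl)

lemma ε_single : ε (Finsupp.single (0:ℤ) (1:ℤ)) = 1 := by
  rw [ε_apply, Finsupp.sum_single_index rfl]





abbrev W : Type := SemidirectProduct (Multiplicative A) (Multiplicative ℤ) ψ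

universe u
variable {X : Type u}

def Φ (φ : FreeGroup X →* Multiplicative ℤ) (y : X) [DecidableEq X] : FreeGroup X →* W :=
  FreeGroup.lift fun x =>
    ⟨Multiplicative.ofAdd (if x = y then Finsupp.single 0 1 else 0), φ (FreeGroup.of x)⟩

lemma right_Φ (φ : FreeGroup X →* Multiplicative ℤ) (y : X) [DecidableEq X]
    (w : FreeGroup X) : (Φ φ y w).right = φ w := by
  have h : SemidirectProduct.rightHom.comp (Φ φ y) = φ := by
    apply FreeGroup.ext_hom
    intro a
    simp [Φ]
  calc (Φ φ y w).right = SemidirectProduct.rightHom.comp (Φ φ y) w := rfl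
    _ = φ w := by rw [h]

lemma conj_left (a b : W) (hb : b.right = 1) : (a * b * a⁻¹).left = ψ a.right b.left := by
  have h1 : (a * b).left = a.left * ψ a.right b.left := rfl
  have h2 : (a * b).right = a.right := by
    show a.right * b.right = a.right
    rw [hb, mul_one]
  show (a * b).left * ψ (a * b).right a⁻¹.left = _
  rw [h1, h2, SemidirectProduct.inv_left]
  rw [← MulAut.mul_apply, ← map_mul, mul_inv_cancel, map_one, MulAut.one_apply]
  rw [mul_comm a.left _, mul_assoc, mul_inv_cancel, mul_one]

lemma window (φ : FreeGroup X →* Multiplicative ℤ) (y : X) [DecidableEq X]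
    (S : Finset (FreeGroup X)) (hS : Subgroup.closure (S : Set (FreeGroup X)) = φ.ker)
    (w : FreeGroup X) (hw : w ∈ φ.ker) :
    ((Φ φ y w).left.toAdd).support ⊆ S.sup fun s => ((Φ φ y s).left.toAdd).support := by
  rw [← hS] at hw
  refine Subgroup.closure_induction
    (p := fun g _ => ((Φ φ y g).left.toAdd).support ⊆
      S.sup fun s => ((Φ φ y s).left.toAdd).support) ?_ ?_ ?_ ?_ hw
  · intro x hx
    exact Finset.le_sup (f := fun s => ((Φ φ y s).left.toAdd).support) hx
  · show ((Φ φ y 1).left.toAdd).support ⊆ _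
    rw [map_one]
    show ((1 : Multiplicative A).toAdd).support ⊆ _
    simp
  · intro g₁ g₂ hg₁ hg₂ ih₁ ih₂
    have hker1 : φ g₁ = 1 := by rw [hS] at hg₁; exact hg₁
    have hl : (Φ φ y (g₁ * g₂)).left = (Φ φ y g₁).left * (Φ φ y g₂).left := by
      rw [map_mul]
      show (Φ φ y g₁).left * ψ (Φ φ y g₁).right (Φ φ y g₂).left = _
      rw [right_Φ, hker1, map_one, MulAut.one_apply]
    rw [hl]
    refine subset_trans ?_ (Finset.union_subset ih₁ ih₂)
    exact Finsupp.support_add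
  · intro g hg ih
    have hker1 : φ g = 1 := by rw [hS] at hg; exact hg
    have hl : (Φ φ y g⁻¹).left = ((Φ φ y g).left)⁻¹ := by
      rw [map_inv, SemidirectProduct.inv_left, right_Φ, hker1, inv_one, map_one,
        MulAut.one_apply]
    rw [hl]
    show ((-(Φ φ y g).left.toAdd)).support ⊆ _
    rwa [Finsupp.support_neg]

section UU

variable (φ : FreeGroup X →* Multiplicative ℤ) (g₁ : FreeGroup X) (x : X)

def w0 : FreeGroup X := FreeGroup.of x * g₁ ^ (-(φ (FreeGroup.of x)).toAdd)

def uu (k : ℤ) : FreeGroup X := g₁ ^ k * w0 φ g₁ x * g₁ ^ (-k)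

variable (hg₁ : φ g₁ = Multiplicative.ofAdd 1)

include hg₁ in
lemma phi_w0 : φ (w0 φ g₁ x) = 1 := by
  unfold w0
  rw [map_mul, map_zpow, hg₁]
  apply Multiplicative.toAdd.injective
  simp

include hg₁ in
lemma phi_uu (k : ℤ) : φ (uu φ g₁ x k) = 1 := by
  unfold uu
  rw [map_mul, map_mul, map_zpow, map_zpow, hg₁, phi_w0 φ g₁ x hg₁]
  apply Multiplicative.toAdd.injective
  simp

variable (y : X) [DecidableEq X]

include hg₁ in
lemma left_uu : ∀ k : ℤ,
    (Φ φ y (uu φ g₁ x k)).left = ψ (Multiplicative.ofAdd k) ((Φ φ y (w0 φ g₁ x)).left) := by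
  have key : ∀ (g : FreeGroup X) (k : ℤ), (Φ φ y (uu φ g₁ x k)).right = 1 →
      (Φ φ y (g * uu φ g₁ x k * g⁻¹)).left
        = ψ (φ g) ((Φ φ y (uu φ g₁ x k)).left) := by
    intro g k hr
    rw [map_mul, map_mul, map_inv]
    rw [conj_left _ _ hr, right_Φ]
  intro k
  induction k using Int.induction_on with
  | zero =>
    have : uu φ g₁ x 0 = w0 φ g₁ x := by unfold uu; group
    rw [this]
    have h0 : (Multiplicative.ofAdd (0:ℤ)) = (1 : Multiplicative ℤ) := rfl
    rw [h0, map_one, MulAut.one_apply]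
  | succ k ih =>
    have huu : uu φ g₁ x ((k:ℤ) + 1) = g₁ * uu φ g₁ x k * g₁⁻¹ := by unfold uu; group
    rw [huu, key g₁ k (by rw [right_Φ]; exact phi_uu φ g₁ x hg₁ k), ih, hg₁,
      ← MulAut.mul_apply, ← map_mul, ← ofAdd_add]
    norm_num [add_comm]
  | pred k ih =>
    have huu : uu φ g₁ x (-(k:ℤ) - 1) = g₁⁻¹ * uu φ g₁ x (-k) * (g₁⁻¹)⁻¹ := by
      unfold uu; group
    rw [huu, key g₁⁻¹ (-k) (by rw [right_Φ]; exact phi_uu φ g₁ x hg₁ (-k)), ih, map_inv, hg₁,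
      ← MulAut.mul_apply, ← map_mul]
    have : (Multiplicative.ofAdd (1:ℤ))⁻¹ * Multiplicative.ofAdd (-(k:ℤ))
        = Multiplicative.ofAdd (-(k:ℤ) - 1) := by
      rw [← ofAdd_neg, ← ofAdd_add]
      congr 1
      ring
    rw [this]

end UU

lemma eps_toAdd_ψ (c : Multiplicative ℤ) (aM : Multiplicative A) :
    ε ((ψ c aM).toAdd) = ε aM.toAdd := by
  rw [ψ_apply, toAdd_ofAdd, ε_shift]

section EPS

variable (φ : FreeGroup X →* Multiplicative ℤ) (g₁ : FreeGroup X)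
  (y : X) [DecidableEq X]

lemma eps_pow : ∀ m : ℤ,
    ε ((Φ φ y (g₁ ^ m)).left.toAdd) = m * ε ((Φ φ y g₁).left.toAdd) := by
  have hmul : ∀ u v : FreeGroup X,
      (Φ φ y (u * v)).left = (Φ φ y u).left * ψ (φ u) ((Φ φ y v).left) := by
    intro u v
    rw [map_mul]
    show (Φ φ y u).left * ψ (Φ φ y u).right (Φ φ y v).left = _
    rw [right_Φ]
  have hinv : (Φ φ y g₁⁻¹).left = ψ (φ g₁)⁻¹ (((Φ φ y g₁).left)⁻¹) := by
    rw [map_inv, SemidirectProduct.inv_left, right_Φ]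
  intro m
  induction m using Int.induction_on with
  | zero =>
    rw [zpow_zero, map_one]
    show ε ((1 : Multiplicative A).toAdd) = 0 * _
    simp
  | succ k ih =>
    rw [zpow_add, zpow_one, hmul, toAdd_mul, map_add, ih, eps_toAdd_ψ]
    ring
  | pred k ih =>
    have : g₁ ^ (-(k:ℤ) - 1) = g₁ ^ (-(k:ℤ)) * g₁⁻¹ := by group
    rw [this, hmul, toAdd_mul, map_add, ih, eps_toAdd_ψ _ _, hinv, eps_toAdd_ψ]
    show -(k:ℤ) * _ + ε (-(Φ φ y g₁).left.toAdd) = _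
    rw [map_neg]
    ring

end EPS

theorem core (φ : FreeGroup X →* Multiplicative ℤ) (hsurj : Function.Surjective φ)
    (hfg : φ.ker.FG) (hne : φ.ker ≠ ⊥) : False := by
  classical
  by_cases hX : ∃ x₁ x₂ : X, x₁ ≠ x₂
  · obtain ⟨x₁, x₂, h12⟩ := hX
    obtain ⟨g₁, hg₁⟩ := hsurj (Multiplicative.ofAdd 1)
    obtain ⟨S, hS⟩ := hfg
    have hzero : ∀ y x : X, ((Φ φ y (w0 φ g₁ x)).left).toAdd = 0 := by
      intro y x
      by_contra hβ
      obtain ⟨d, hd⟩ := Finsupp.ne_iff.mp hβ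
      simp only [Finsupp.coe_zero, Pi.zero_apply] at hd
      obtain ⟨z, hz⟩ :=
        Infinite.exists_notMem_finset (S.sup fun s => ((Φ φ y s).left.toAdd).support)
      have hu : uu φ g₁ x (z - d) ∈ φ.ker := by
        rw [MonoidHom.mem_ker]
        exact phi_uu φ g₁ x hg₁ _
      have hsub := window φ y S hS _ hu
      have hmem : z ∈ ((Φ φ y (uu φ g₁ x (z - d))).left.toAdd).support := by
        rw [left_uu φ g₁ x hg₁ y, ψ_apply, toAdd_ofAdd, Finsupp.mem_support_iff,
          shiftE_apply, toAdd_ofAdd]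
        simpa [sub_sub_cancel] using hd
      exact hz (hsub hmem)
    have heps : ∀ y x : X,
        (if x = y then (1:ℤ) else 0)
          = (φ (FreeGroup.of x)).toAdd * ε ((Φ φ y g₁).left.toAdd) := by
      intro y x
      have h0 := hzero y x
      have hmul : (Φ φ y (w0 φ g₁ x)).left
          = (Φ φ y (FreeGroup.of x)).left *
            ψ (φ (FreeGroup.of x)) ((Φ φ y (g₁ ^ (-(φ (FreeGroup.of x)).toAdd))).left) := by
        unfold w0
        rw [map_mul]
        show _ * ψ (Φ φ y (FreeGroup.of x)).right _ = _
        rw [right_Φ]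
      have hofx : (Φ φ y (FreeGroup.of x)).left
          = Multiplicative.ofAdd (if x = y then Finsupp.single 0 1 else 0) := by
        simp [Φ]
      have e1 : ε ((Φ φ y (w0 φ g₁ x)).left.toAdd)
          = (if x = y then 1 else 0)
            + (-(φ (FreeGroup.of x)).toAdd) * ε ((Φ φ y g₁).left.toAdd) := by
        rw [hmul, toAdd_mul, map_add, hofx, toAdd_ofAdd, eps_toAdd_ψ,
          eps_pow φ g₁ y]
        congr 1
        split_ifs
        · exact ε_single
        · exact map_zero ε
      rw [h0, map_zero] at e1
      linarith [e1]
    have e11 := heps x₁ x₁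
    have e21 := heps x₁ x₂
    have e22 := heps x₂ x₂
    rw [if_pos rfl] at e11 e22
    rw [if_neg (fun h => h12 h.symm)] at e21
    have ha1 : ε ((Φ φ x₁ g₁).left.toAdd) ≠ 0 := by
      intro h
      rw [h, mul_zero] at e11
      exact one_ne_zero e11
    have hn2 : (φ (FreeGroup.of x₂)).toAdd = 0 := by
      rcases mul_eq_zero.mp e21.symm with h | h
      · exact h
      · exact absurd h ha1
    rw [hn2, zero_mul] at e22
    exact one_ne_zero e22
  · push_neg at hX
    obtain ⟨w, hwk, hw1⟩ : ∃ w ∈ φ.ker, w ≠ 1 := by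
      by_contra hc
      push_neg at hc
      exact hne ((Subgroup.eq_bot_iff_forall _).mpr hc)
    rcases isEmpty_or_nonempty X with hE | hNE
    · have hall1 : ∀ g : FreeGroup X, g = 1 := by
        intro g
        induction g using FreeGroup.induction_on with
        | C1 => rfl
        | of a => exact (hE.false a).elim
        | inv_of a _ => exact (hE.false a).elim
        | mul a b ha hb => rw [ha, hb, one_mul]
      exact hw1 (hall1 w)
    · obtain ⟨x₀⟩ := hNE
      set θ : FreeGroup X →* Multiplicative ℤ :=
        FreeGroup.lift fun _ => Multiplicative.ofAdd (1:ℤ) with hθ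
      have hrep : ∀ g : FreeGroup X, g = FreeGroup.of x₀ ^ (θ g).toAdd := by
        have hσ : (zpowersHom (FreeGroup X) (FreeGroup.of x₀)).comp θ = MonoidHom.id _ := by
          apply FreeGroup.ext_hom
          intro a
          simp only [MonoidHom.comp_apply, MonoidHom.id_apply, hθ, FreeGroup.lift_apply_of,
            zpowersHom_apply, toAdd_ofAdd, zpow_one]
          exact congrArg FreeGroup.of (hX x₀ a)
        intro g
        have h := DFunLike.congr_fun hσ g
        simp only [MonoidHom.comp_apply, MonoidHom.id_apply, zpowersHom_apply] at h
        exact h.symm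
      have hφg : ∀ g : FreeGroup X, (φ g).toAdd = (θ g).toAdd * (φ (FreeGroup.of x₀)).toAdd := by
        intro g
        conv_lhs => rw [hrep g]
        rw [map_zpow, toAdd_zpow]
        exact smul_eq_mul _ _
      obtain ⟨v, hv⟩ := hsurj (Multiplicative.ofAdd 1)
      have h1 : (θ v).toAdd * (φ (FreeGroup.of x₀)).toAdd = 1 := by
        rw [← hφg v, hv, toAdd_ofAdd]
      have h2 : (θ w).toAdd * (φ (FreeGroup.of x₀)).toAdd = 0 := by
        rw [← hφg w]
        rw [MonoidHom.mem_ker] at hwk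
        rw [hwk]
        rfl
      have hc0 : (φ (FreeGroup.of x₀)).toAdd ≠ 0 := by
        intro h
        rw [h, mul_zero] at h1
        exact one_ne_zero h1.symm
      have hθw : (θ w).toAdd = 0 := by
        rcases mul_eq_zero.mp h2 with h | h
        · exact h
        · exact absurd h hc0
      exact hw1 (by rw [hrep w, hθw, zpow_zero])

end

end PrimNorm

/-- A nontrivial finitely generated primitive subgroup `H` of the free group `Fₙ`
(primitive: `γ^k ∈ H` for some `k ≥ 1` implies `γ ∈ H`) equals its own normalizer. -/
theorem primitive_subgroup_self_normalizing {n : ℕ} (H : Subgroup (FreeGroup (Fin n)))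
    (hne : H ≠ ⊥) (hfg : H.FG)
    (hprim : ∀ (γ : FreeGroup (Fin n)) (k : ℕ), 1 ≤ k → γ ^ k ∈ H → γ ∈ H) :
    Subgroup.normalizer (H : Set (FreeGroup (Fin n))) = H := by
  classical
  refine le_antisymm ?_ Subgroup.le_normalizer
  intro γ hγ
  by_contra hγH
  -- no nonzero power of γ lies in H
  have hpow : ∀ k : ℤ, γ ^ k ∈ H → k = 0 := by
    intro k hk
    by_contra hk0
    have habs : γ ^ ((k.natAbs : ℤ)) ∈ H := by
      rcases Int.natAbs_eq k with h | h
      · rwa [← h]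
      · rw [h] at hk
        rw [zpow_neg] at hk
        exact (inv_mem_iff).mp hk
    rw [zpow_natCast] at habs
    exact hγH (hprim γ k.natAbs (by omega) habs)
  let K : Subgroup (FreeGroup (Fin n)) := Subgroup.closure (↑H ∪ {γ})
  have hHK : H ≤ K := fun h hh => Subgroup.subset_closure (Or.inl hh)
  have hγK : γ ∈ K := Subgroup.subset_closure (Or.inr rfl)
  have hKnorm : K ≤ Subgroup.normalizer (H : Set (FreeGroup (Fin n))) := by
    apply (Subgroup.closure_le _).2
    rintro g (hg | hg)
    · exact Subgroup.le_normalizer hg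
    · rw [Set.mem_singleton_iff] at hg
      rw [hg]
      exact hγ
  let H₀ : Subgroup ↥K := H.subgroupOf K
  haveI hH₀n : H₀.Normal := by
    constructor
    intro h hh k
    rw [Subgroup.mem_subgroupOf] at hh ⊢
    have hnorm := Subgroup.mem_normalizer_iff.mp (hKnorm k.2)
    exact (hnorm (h : (FreeGroup (Fin n)))).mp hh
  let q := QuotientGroup.mk' H₀
  let γ' : ↥K := ⟨γ, hγK⟩
  have hqker : ∀ x : ↥K, q x = 1 ↔ (x : (FreeGroup (Fin n))) ∈ H := by
    intro x
    rw [← MonoidHom.mem_ker, QuotientGroup.ker_mk']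
    exact Iff.rfl
  have hgen : ∀ z : ↥K ⧸ H₀, ∃ m : ℤ, z = (q γ') ^ m := by
    intro z
    obtain ⟨g, rfl⟩ := QuotientGroup.mk'_surjective H₀ z
    obtain ⟨g, hg⟩ := g
    refine Subgroup.closure_induction
      (p := fun w hw => ∃ m : ℤ, q ⟨w, hw⟩ = (q γ') ^ m) ?_ ?_ ?_ ?_ hg
    · rintro w (hw | hw)
      · refine ⟨0, ?_⟩
        rw [zpow_zero]
        exact (hqker _).mpr hw
      · rw [Set.mem_singleton_iff] at hw
        refine ⟨1, ?_⟩
        rw [zpow_one]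
        congr 1
        exact Subtype.ext hw
    · exact ⟨0, by rw [zpow_zero]; exact (hqker _).mpr (one_mem H)⟩
    · rintro a b ha hb ⟨m₁, e₁⟩ ⟨m₂, e₂⟩
      refine ⟨m₁ + m₂, ?_⟩
      have : (⟨a * b, mul_mem ha hb⟩ : ↥K) = ⟨a, ha⟩ * ⟨b, hb⟩ := rfl
      rw [this, map_mul, e₁, e₂, zpow_add]
    · rintro a ha ⟨m, e⟩
      refine ⟨-m, ?_⟩
      have : (⟨a⁻¹, inv_mem ha⟩ : ↥K) = (⟨a, ha⟩ : ↥K)⁻¹ := rfl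
      rw [this, map_inv, e, zpow_neg]
  have hord : ∀ m : ℤ, (q γ') ^ m = 1 → m = 0 := by
    intro m hm
    rw [← map_zpow] at hm
    have h2 : ((γ' ^ m : ↥K) : (FreeGroup (Fin n))) ∈ H := (hqker _).mp hm
    have h3 : ((γ' ^ m : ↥K) : (FreeGroup (Fin n))) = γ ^ m := by
      rw [SubgroupClass.coe_zpow]
    rw [h3] at h2
    exact hpow m h2
  let zf : Multiplicative ℤ →* (↥K ⧸ H₀) := zpowersHom _ (q γ')
  have hbij : Function.Bijective zf := by
    constructor
    · rw [injective_iff_map_eq_one]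
      intro a ha
      have := hord a.toAdd (by rw [← zpowersHom_apply]; exact ha)
      exact Multiplicative.toAdd.injective this
    · intro z
      obtain ⟨m, hm⟩ := hgen z
      exact ⟨Multiplicative.ofAdd m, by rw [zpowersHom_apply, toAdd_ofAdd, hm]⟩
  let e := MulEquiv.ofBijective zf hbij
  let φK : ↥K →* Multiplicative ℤ := e.symm.toMonoidHom.comp q
  have hφKsurj : Function.Surjective φK :=
    e.symm.surjective.comp (QuotientGroup.mk'_surjective H₀)
  have hφKker : ∀ x : ↥K, φK x = 1 ↔ (x : (FreeGroup (Fin n))) ∈ H := by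
    intro x
    rw [← hqker x]
    show e.symm (q x) = 1 ↔ _
    rw [MulEquiv.map_eq_one_iff]
  let X := IsFreeGroup.Generators ↥K
  let ι : FreeGroup X ≃* ↥K := (IsFreeGroup.toFreeGroup ↥K).symm
  let φ : FreeGroup X →* Multiplicative ℤ := φK.comp ι.toMonoidHom
  have hφsurj : Function.Surjective φ := hφKsurj.comp ι.surjective
  let j : FreeGroup X →* (FreeGroup (Fin n)) := K.subtype.comp ι.toMonoidHom
  have hjinj : Function.Injective j := K.subtype_injective.comp ι.injective
  have hkerj : ∀ w : FreeGroup X, φ w = 1 ↔ j w ∈ H := by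
    intro w
    exact hφKker (ι w)
  have hker : φ.ker = Subgroup.comap j H := by
    ext w
    rw [MonoidHom.mem_ker, Subgroup.mem_comap]
    exact hkerj w
  obtain ⟨S, hS⟩ := hfg
  have hSH : ∀ s ∈ S, s ∈ H := by
    intro s hs
    rw [← hS]
    exact Subgroup.subset_closure hs
  let T : Finset (FreeGroup X) := S.attach.image fun s => ι.symm ⟨s.1, hHK (hSH s.1 s.2)⟩
  have hjT : j '' ↑T = ↑S := by
    ext g
    constructor
    · rintro ⟨w, hw, rfl⟩
      simp only [T, Finset.coe_image] at hw
      obtain ⟨s, _, rfl⟩ := hw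
      have : j (ι.symm ⟨s.1, hHK (hSH s.1 s.2)⟩) = s.1 := by
        show (K.subtype) (ι (ι.symm _)) = s.1
        rw [MulEquiv.apply_symm_apply]
        rfl
      rw [this]
      exact s.2
    · intro hg
      refine ⟨ι.symm ⟨g, hHK (hSH g hg)⟩, ?_, ?_⟩
      · simp only [T, Finset.coe_image]
        exact ⟨⟨g, hg⟩, Finset.mem_coe.mpr (S.mem_attach _), rfl⟩
      · show (K.subtype) (ι (ι.symm _)) = g
        rw [MulEquiv.apply_symm_apply]
        rfl
  have hfgker : φ.ker.FG := by
    refine ⟨T, ?_⟩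
    have h1 : Subgroup.map j (Subgroup.closure ↑T) = H := by
      rw [MonoidHom.map_closure, hjT, hS]
    have h2 : Subgroup.comap j H = Subgroup.closure ↑T := by
      rw [← h1, Subgroup.comap_map_eq, (MonoidHom.ker_eq_bot_iff j).mpr hjinj, sup_bot_eq]
    rw [hker, h2]
  have hkerne : φ.ker ≠ ⊥ := by
    obtain ⟨h₀, hh₀, hh₁⟩ : ∃ x ∈ H, x ≠ (1 : (FreeGroup (Fin n))) := by
      by_contra hc
      push_neg at hc
      exact hne ((Subgroup.eq_bot_iff_forall _).mpr hc)
    intro hbot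
    have hwker : ι.symm ⟨h₀, hHK hh₀⟩ ∈ φ.ker := by
      rw [MonoidHom.mem_ker, hkerj]
      show (K.subtype) (ι (ι.symm _)) ∈ H
      rw [MulEquiv.apply_symm_apply]
      exact hh₀
    rw [hbot, Subgroup.mem_bot] at hwker
    apply hh₁
    have : ((⟨h₀, hHK hh₀⟩ : ↥K) : (FreeGroup (Fin n))) = ((1 : ↥K) : (FreeGroup (Fin n))) := by
      rw [← MulEquiv.apply_symm_apply ι ⟨h₀, hHK hh₀⟩, hwker, map_one]
    simpa using this
  exact (PrimNorm.core φ hφsurj hfgker hkerne).elim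
end

section
/- Let H be a finitely generated subgroup of the free group F_n (with a fixed free basis), and let S be a finite generating set for H. Then the inclusion of H into F_n is a quasi-isometric embedding: there exists a constant C > 0 such that every element h ∈ H can be written as a product of at most C·(|h| + 1) elements of S ∪ S⁻¹, where |h| denotes the reduced word length of h in F_n with respect to the fixed free basis. -/
open FreeGroup List

variable {α : Type*} [DecidableEq α]

/-- no-cancellation relation on letters -/
def NoCan (a b : α × Bool) : Prop := ¬(a.1 = b.1 ∧ a.2 = !b.2)

lemma reduce_eq_self_of_chain' : ∀ {w : List (α × Bool)}, List.Chain' NoCan w →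
    FreeGroup.reduce w = w
  | [], _ => rfl
  | x :: L, h => by
    have hL : reduce L = L := reduce_eq_self_of_chain' h.tail
    cases L with
    | nil => rfl
    | cons hd tl =>
      have hnc : ¬(x.1 = hd.1 ∧ x.2 = !hd.2) := (List.isChain_cons_cons.mp h).1
      rw [reduce.cons, hL]
      exact if_neg hnc

lemma chain'_of_reduce_eq_self : ∀ {w : List (α × Bool)}, FreeGroup.reduce w = w →
    List.Chain' NoCan w
  | [], _ => List.isChain_nil
  | x :: L, h => by
    rw [reduce.cons] at h
    rcases hL : reduce L with _ | ⟨hd, tl⟩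
    · rw [hL] at h
      simp only [] at h
      have : L = [] := by injection h with _ h2; exact h2.symm
      subst this
      exact List.isChain_singleton x
    · rw [hL] at h
      simp only [] at h
      by_cases hc : x.1 = hd.1 ∧ x.2 = !hd.2
      · rw [if_pos hc] at h
        have h1 : (reduce L).length ≤ L.length := FreeGroup.Red.length_le reduce.red
        rw [hL] at h1
        rw [h] at h1
        simp at h1
      · rw [if_neg hc] at h
        have hL' : L = hd :: tl := by injection h with _ h2; exact h2.symm
        subst hL'
        exact List.isChain_cons_cons.mpr ⟨hc, chain'_of_reduce_eq_self hL⟩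

lemma chain'_toWord (x : FreeGroup α) : List.Chain' NoCan x.toWord :=
  chain'_of_reduce_eq_self (FreeGroup.reduce_toWord x)

lemma cancel_lemma : ∀ (w₁ w₂ : List (α × Bool)), List.Chain' NoCan w₁ →
    List.Chain' NoCan w₂ →
    ∃ u c v, w₁ = u ++ c ∧ w₂ = FreeGroup.invRev c ++ v ∧ List.Chain' NoCan (u ++ v) ∧
      FreeGroup.mk w₁ * FreeGroup.mk w₂ = FreeGroup.mk (u ++ v) := by
  intro w₁
  induction w₁ using List.reverseRecOn with
  | nil =>
    intro w₂ _ h₂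
    exact ⟨[], [], w₂, rfl, by simp [invRev], by simpa using h₂, by rw [mul_mk]⟩
  | append_singleton w₁' x ih =>
    intro w₂ h₁ h₂
    match w₂ with
    | [] =>
      refine ⟨w₁' ++ [x], [], [], (List.append_nil _).symm, by simp [invRev], by simpa using h₁,
        by rw [mul_mk]⟩
    | y :: w₂' =>
      by_cases hc : x.1 = y.1 ∧ x.2 = !y.2
      · obtain ⟨xa, xb⟩ := x
        obtain ⟨ya, yb⟩ := y
        obtain ⟨hc1, hc2⟩ := hc
        simp only at hc1 hc2
        subst hc1
        have hyb : yb = !xb := by subst hc2; simp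
        subst hyb
        have hx1 : List.Chain' NoCan w₁' := (List.isChain_append.mp h₁).1
        have hx2 : List.Chain' NoCan w₂' := h₂.tail
        obtain ⟨u, c, v, e1, e2, e3, e4⟩ := ih w₂' hx1 hx2
        refine ⟨u, c ++ [(xa, xb)], v, by rw [e1, List.append_assoc], ?_, e3, ?_⟩
        · rw [e2]; simp [invRev]
        · have hstep : FreeGroup.Red.Step ((w₁' ++ [(xa, xb)]) ++ ((xa, !xb) :: w₂'))
              (w₁' ++ w₂') := by
            have : (w₁' ++ [(xa, xb)]) ++ ((xa, !xb) :: w₂')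
                = w₁' ++ ((xa, xb) :: (xa, !xb) :: w₂') := by simp
            rw [this]
            exact FreeGroup.Red.Step.not
          have : FreeGroup.mk ((w₁' ++ [(xa, xb)]) ++ ((xa, !xb) :: w₂'))
              = FreeGroup.mk (w₁' ++ w₂') :=
            FreeGroup.reduce.exact (FreeGroup.reduce.Step.eq hstep)
          rw [mul_mk, this, ← mul_mk, e4]
      · refine ⟨w₁' ++ [x], [], y :: w₂', (List.append_nil _).symm, by simp [invRev], ?_,
          by rw [mul_mk]⟩
        refine List.isChain_append.mpr ⟨h₁, h₂, ?_⟩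
        intro a ha b hb
        simp at ha hb
        subst ha
        subst hb
        exact hc

lemma cancel_toWord (x y : FreeGroup α) :
    ∃ u c v, x.toWord = u ++ c ∧ y.toWord = FreeGroup.invRev c ++ v ∧
      (x * y).toWord = u ++ v := by
  obtain ⟨u, c, v, e1, e2, e3, e4⟩ := cancel_lemma x.toWord y.toWord
    (chain'_toWord x) (chain'_toWord y)
  refine ⟨u, c, v, e1, e2, ?_⟩
  rw [FreeGroup.mk_toWord, FreeGroup.mk_toWord] at e4
  rw [e4, FreeGroup.toWord_mk, reduce_eq_self_of_chain' e3]

variable (S : Finset (FreeGroup α))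

/-- The finite set of prefixes of generators. -/
noncomputable def Rset : Finset (FreeGroup α) :=
  insert 1 ((S ∪ S.image (·⁻¹)).biUnion fun s =>
    (Finset.range (s.toWord.length + 1)).image fun j => FreeGroup.mk (s.toWord.take j))

lemma mem_Rset {s : FreeGroup α} (hs : s ∈ S ∪ S.image (·⁻¹)) (j : ℕ) :
    FreeGroup.mk (s.toWord.take j) ∈ Rset S := by
  rcases le_or_gt j s.toWord.length with hj | hj
  · exact Finset.mem_insert_of_mem (Finset.mem_biUnion.mpr ⟨s, hs,
      Finset.mem_image.mpr ⟨j, Finset.mem_range.mpr (by omega), rfl⟩⟩)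
  · rw [List.take_of_length_le (le_of_lt hj)]
    refine Finset.mem_insert_of_mem (Finset.mem_biUnion.mpr ⟨s, hs,
      Finset.mem_image.mpr ⟨s.toWord.length, Finset.mem_range.mpr (by omega), ?_⟩⟩)
    rw [List.take_length]

lemma prefix_coset : ∀ l : List (FreeGroup α), (∀ x ∈ l, x ∈ S ∨ x⁻¹ ∈ S) → ∀ j : ℕ,
    ∃ r ∈ Rset S, r * (FreeGroup.mk ((l.prod).toWord.take j))⁻¹ ∈
      Subgroup.closure (S : Set (FreeGroup α)) := by
  intro l
  induction l using List.reverseRecOn with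
  | nil =>
    intro _ j
    refine ⟨1, Finset.mem_insert_self _ _, ?_⟩
    have h0 : (([] : List (FreeGroup α)).prod).toWord.take j = [] := by
      simp [FreeGroup.toWord_one]
    rw [h0, ← FreeGroup.one_eq_mk]
    simpa using one_mem _
  | append_singleton l' s ih =>
    intro hl j
    have hl' : ∀ x ∈ l', x ∈ S ∨ x⁻¹ ∈ S := fun x hx => hl x (by simp [hx])
    have hs : s ∈ S ∨ s⁻¹ ∈ S := hl s (by simp)
    have hprod : (l' ++ [s]).prod = l'.prod * s := by simp
    obtain ⟨u, c, v, e1, e2, e3⟩ := cancel_toWord l'.prod s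
    rcases le_or_gt j u.length with hj | hj
    · -- prefix of h'
      have htake : ((l' ++ [s]).prod).toWord.take j = (l'.prod).toWord.take j := by
        rw [hprod, e3, e1, List.take_append, List.take_append,
          Nat.sub_eq_zero_of_le hj, List.take_zero, List.take_zero]
      rw [htake]
      exact ih hl' j
    · -- inside s
      set i := j - u.length with hi
      have htake : ((l' ++ [s]).prod).toWord.take j = u ++ v.take i := by
        rw [hprod, e3, List.take_append, List.take_of_length_le (le_of_lt hj)]
      have htake2 : s.toWord.take (c.length + i) = FreeGroup.invRev c ++ v.take i := by
        rw [e2, List.take_append,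
          List.take_of_length_le (by rw [FreeGroup.invRev_length]; omega),
          FreeGroup.invRev_length, Nat.add_sub_cancel_left]
      refine ⟨FreeGroup.mk (s.toWord.take (c.length + i)), ?_, ?_⟩
      · refine mem_Rset S ?_ _
        rcases hs with h | h
        · exact Finset.mem_union_left _ h
        · exact Finset.mem_union_right _ (Finset.mem_image.mpr ⟨s⁻¹, h, by simp⟩)
      · rw [htake, htake2]
        have : FreeGroup.mk (FreeGroup.invRev c ++ v.take i) *
            (FreeGroup.mk (u ++ v.take i))⁻¹ = (l'.prod)⁻¹ := by
          rw [← mul_mk, ← mul_mk, ← FreeGroup.inv_mk]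
          have : l'.prod = FreeGroup.mk u * FreeGroup.mk c := by
            rw [mul_mk, ← e1, FreeGroup.mk_toWord]
          rw [this]
          group
        rw [this]
        refine inv_mem (list_prod_mem ?_)
        intro x hx
        rcases hl' x hx with h | h
        · exact Subgroup.subset_closure h
        · simpa using inv_mem (Subgroup.subset_closure h)

/-- A finitely generated subgroup `H` of the free group `Fₙ` is quasi-isometrically
embedded: if `S` is a finite generating set of `H`, there is a constant `C > 0` such
that every `h ∈ H` is a product of at most `C·(|h| + 1)` elements of `S ∪ S⁻¹`, where
`|h|` is the reduced word length of `h` with respect to the fixed free basis of `Fₙ`. -/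
theorem fg_subgroup_qi_embedded {n : ℕ} (H : Subgroup (FreeGroup (Fin n)))
    (S : Finset (FreeGroup (Fin n)))
    (hS : Subgroup.closure (S : Set (FreeGroup (Fin n))) = H) :
    ∃ C : ℕ, 0 < C ∧ ∀ h ∈ H, ∃ L : List (FreeGroup (Fin n)),
      (∀ x ∈ L, x ∈ S ∨ x⁻¹ ∈ S) ∧ L.prod = h ∧
      L.length ≤ C * (FreeGroup.norm h + 1) := by
  classical
  -- every element of H is a product of generators
  have hexpr : ∀ w : FreeGroup (Fin n), w ∈ H → ∃ L : List (FreeGroup (Fin n)), (∀ x ∈ L, x ∈ S ∨ x⁻¹ ∈ S) ∧ L.prod = w := by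
    intro w hw
    rw [← hS] at hw
    have hw' : w ∈ Submonoid.closure ((S : Set (FreeGroup (Fin n))) ∪ (S : Set (FreeGroup (Fin n)))⁻¹) := by
      rw [← Subgroup.closure_toSubmonoid, Subgroup.mem_toSubmonoid]
      exact hw
    obtain ⟨l, hl, hlp⟩ := Submonoid.exists_list_of_mem_closure hw'
    refine ⟨l, fun x hx => ?_, hlp⟩
    rcases hl x hx with h | h
    · exact Or.inl h
    · exact Or.inr (Set.mem_inv.mp h)
  -- the finite set of letters
  set letters : Finset (FreeGroup (Fin n)) := Finset.univ.image (fun p : Fin n × Bool => FreeGroup.mk [p]) with hlet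
  set T : Finset (FreeGroup (Fin n)) := ((Rset S ×ˢ letters) ×ˢ Rset S).image
    (fun x : (FreeGroup (Fin n) × FreeGroup (Fin n)) × FreeGroup (Fin n) => x.1.1 * x.1.2 * x.2⁻¹) with hT
  set W : Set (FreeGroup (Fin n)) := ((T ∪ Rset S : Finset (FreeGroup (Fin n))) : Set (FreeGroup (Fin n))) ∩ H with hW
  have hWfin : W.Finite := Set.Finite.inter_of_left (Finset.finite_toSet _) _
  -- uniform bound on expressions of elements of W
  have hexprW : ∀ w ∈ W, ∃ L : List (FreeGroup (Fin n)), (∀ x ∈ L, x ∈ S ∨ x⁻¹ ∈ S) ∧ L.prod = w :=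
    fun w hw => hexpr w hw.2
  choose! f hf1 hf2 using hexprW
  set K : ℕ := hWfin.toFinset.sup fun w => (f w).length with hK
  have hKbound : ∀ w ∈ W, ∃ L : List (FreeGroup (Fin n)), (∀ x ∈ L, x ∈ S ∨ x⁻¹ ∈ S) ∧ L.prod = w ∧
      L.length ≤ K := by
    intro w hw
    exact ⟨f w, hf1 w hw, hf2 w hw, Finset.le_sup (f := fun w => (f w).length) (hWfin.mem_toFinset.mpr hw)⟩
  refine ⟨K + 1, Nat.succ_pos _, ?_⟩
  intro h hh
  obtain ⟨l, hl, hlp⟩ := hexpr h hh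
  set w : List (Fin n × Bool) := h.toWord with hw'
  have key : ∀ j : ℕ, j ≤ w.length → ∃ r ∈ Rset S,
      r * (FreeGroup.mk (w.take j))⁻¹ ∈ H ∧
      ∃ L : List (FreeGroup (Fin n)), (∀ x ∈ L, x ∈ S ∨ x⁻¹ ∈ S) ∧
        L.prod = FreeGroup.mk (w.take j) * r⁻¹ ∧ L.length ≤ K * j := by
    intro j
    induction j with
    | zero =>
      intro _
      have h0 : FreeGroup.mk (w.take 0) = 1 := by rw [List.take_zero, ← FreeGroup.one_eq_mk]
      refine ⟨1, Finset.mem_insert_self _ _, ?_, [], by simp, ?_, by simp⟩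
      · rw [h0]; simpa using one_mem H
      · rw [h0]; simp
    | succ j IH =>
      intro hj
      obtain ⟨r, hrR, hrH, L, hLg, hLp, hLl⟩ := IH (by omega)
      have hjw : j < w.length := by omega
      obtain ⟨r', hr'R, hr'H⟩ := prefix_coset S l hl (j + 1)
      rw [hlp, ← hw', hS] at hr'H
      set a : FreeGroup (Fin n) := FreeGroup.mk [w.get ⟨j, hjw⟩] with ha
      have hsucc : w.take (j + 1) = w.take j ++ [w.get ⟨j, hjw⟩] := by
        rw [List.take_succ]
        congr
        rw [List.getElem?_eq_getElem hjw]
        rfl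
      have hmk : FreeGroup.mk (w.take (j + 1)) = FreeGroup.mk (w.take j) * a := by
        rw [hsucc, ← mul_mk]
      set t : FreeGroup (Fin n) := r * a * r'⁻¹ with ht
      have htT : t ∈ T := by
        rw [hT]
        refine Finset.mem_image.mpr ⟨((r, a), r'), ?_, rfl⟩
        refine Finset.mem_product.mpr ⟨Finset.mem_product.mpr ⟨hrR, ?_⟩, hr'R⟩
        exact Finset.mem_image.mpr ⟨w.get ⟨j, hjw⟩, Finset.mem_univ _, rfl⟩
      have htH : t ∈ H := by
        have h2 : FreeGroup.mk (w.take (j + 1)) * r'⁻¹ ∈ H := by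
          have := inv_mem hr'H
          simpa [mul_inv_rev] using this
        have : t = (r * (FreeGroup.mk (w.take j))⁻¹) *
            (FreeGroup.mk (w.take (j + 1)) * r'⁻¹) := by
          rw [ht, hmk]; group
        rw [this]
        exact mul_mem hrH h2
      obtain ⟨Lt, hLtg, hLtp, hLtl⟩ := hKbound t ⟨by simp [htT], htH⟩
      refine ⟨r', hr'R, hr'H, L ++ Lt, ?_, ?_, ?_⟩
      · intro x hx
        rcases List.mem_append.mp hx with h | h
        · exact hLg x h
        · exact hLtg x h
      · rw [List.prod_append, hLp, hLtp, ht, hmk]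
        group
      · rw [List.length_append]
        have : K * (j + 1) = K * j + K := by ring
        omega
  obtain ⟨r, hrR, hrH, L, hLg, hLp, hLl⟩ := key w.length (le_refl _)
  rw [List.take_length, hw', FreeGroup.mk_toWord] at hrH hLp
  have hrH' : r ∈ H := by
    have : r = r * h⁻¹ * h := by group
    rw [this]
    exact mul_mem hrH hh
  obtain ⟨Lr, hLrg, hLrp, hLrl⟩ := hKbound r ⟨by simp [hrR], hrH'⟩
  refine ⟨L ++ Lr, ?_, ?_, ?_⟩
  · intro x hx
    rcases List.mem_append.mp hx with h | h
    · exact hLg x h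
    · exact hLrg x h
  · rw [List.prod_append, hLp, hLrp]
    group
  · rw [List.length_append]
    have hnorm : FreeGroup.norm h = w.length := rfl
    rw [hnorm]
    have : (K + 1) * (w.length + 1) = K * w.length + K + w.length + 1 := by ring
    omega
end
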